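/- arXiv:2208.01120 — 14 statements merged into one kernel-verified Lean document; each statement's English description precedes it below -/
import Mathlib

section
/- Every stable rest point of the replicator map R_S is a Nash equilibrium: if x ∈ S^{m-1} satisfies R_S(x) = x and x is stable, then ⟨x, F(x)⟩ ≥ ⟨y, F(x)⟩ for all y ∈ S^{m-1}. -/
open Filter Topology

/-- The standard simplex `S^{m-1}` in `ℝ^m`. -/
def simplexS (m : ℕ) : Set (Fin m → ℝ) :=
  {x | (∀ k, 0 ≤ x k) ∧ ∑ k, x k = 1}

/-- The part `B^m_+` of the unit `l_1`-ball lying in the positive orthant. -/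
def ballB (m : ℕ) : Set (Fin m → ℝ) :=
  {x | (∀ k, 0 ≤ x k) ∧ ∑ k, x k ≤ 1}
/-- every stable rest point of the replicator map `R_S` is a Nash equilibrium. -/
theorem stmt_2 (m : ℕ) (hm : 2 ≤ m)
    (F R : (Fin m → ℝ) → (Fin m → ℝ))
    (hFcont : ContinuousOn F (ballB m))
    (hFsop : ∀ x ∈ ballB m, ∀ i j, F x j ≤ F x i ↔ x j ≤ x i)
    (hFpos : ∀ x ∈ ballB m, ∀ k, 0 < F x k ∧ F x k ≤ 1)
    (hR : ∀ x k, R x k = x k * (1 + F x k - ∑ i, x i * F x i)) :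
    ∀ x ∈ simplexS m, R x = x →
      (∀ U ∈ 𝓝[simplexS m] x, ∃ V ∈ 𝓝[simplexS m] x, V ⊆ U ∧
        ∀ y ∈ V ∩ simplexS m, ∀ n : ℕ, R^[n] y ∈ U) →
      ∀ y ∈ simplexS m, ∑ k, y k * F x k ≤ ∑ k, x k * F x k := by
  intro x hx hrest _hstab y hy
  have hxB : x ∈ ballB m := ⟨hx.1, le_of_eq hx.2⟩
  set c := ∑ i, x i * F x i with hc
  -- at a rest point, positive coordinates have payoff c
  have hpos : ∀ i, 0 < x i → F x i = c := by
    intro i hi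
    have h1 : R x i = x i := congrFun hrest i
    rw [hR] at h1
    have h2 : x i * (F x i - c) = 0 := by ring_nf; ring_nf at h1; linarith
    rcases mul_eq_zero.mp h2 with h | h
    · exact absurd h (ne_of_gt hi)
    · linarith
  -- some coordinate is positive
  obtain ⟨i0, hi0⟩ : ∃ i, 0 < x i := by
    by_contra h
    push_neg at h
    have : ∀ i ∈ Finset.univ, x i = 0 := fun i _ => le_antisymm (h i) (hx.1 i)
    have := Finset.sum_eq_zero this
    rw [hx.2] at this; norm_num at this
  have hFi0 : F x i0 = c := hpos i0 hi0
  have hkey : ∀ k, F x k ≤ c := by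
    intro k
    rcases (hx.1 k).lt_or_eq with hk | hk
    · exact le_of_eq (hpos k hk)
    · have hxk : x k ≤ x i0 := by linarith
      have := (hFsop x hxB i0 k).mpr hxk
      linarith
  calc ∑ k, y k * F x k ≤ ∑ k, y k * c :=
        Finset.sum_le_sum fun k _ => mul_le_mul_of_nonneg_left (hkey k) (hy.1 k)
    _ = c := by rw [← Finset.sum_mul, hy.2, one_mul]
end

section
/- Every strictly Nash equilibrium of the replicator map R_S is asymptotically stable: if x ∈ S^{m-1} satisfies ⟨x, F(x)⟩ > ⟨y, F(x)⟩ for all y ∈ S^{m-1} with y ≠ x, then x is a rest point that is both stable and attracting. -/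
open Filter Topology

lemma simplex_mem_ball {m : ℕ} {x : Fin m → ℝ} (hx : x ∈ simplexS m) : x ∈ ballB m :=
  ⟨hx.1, le_of_eq hx.2⟩

lemma coord_le_one {m : ℕ} {x : Fin m → ℝ} (hx : x ∈ simplexS m) (k : Fin m) : x k ≤ 1 := by
  rw [← hx.2]
  exact Finset.single_le_sum (fun i _ => hx.1 i) (Finset.mem_univ k)

lemma coord_le_sub {m : ℕ} {x : Fin m → ℝ} (hx : x ∈ simplexS m) {j k : Fin m} (h : j ≠ k) :
    x j ≤ 1 - x k := by
  have h2 : x j + x k ≤ ∑ i, x i := by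
    rw [← Finset.sum_pair h]
    exact Finset.sum_le_sum_of_subset_of_nonneg (Finset.subset_univ _) (fun i _ _ => hx.1 i)
  have := hx.2
  linarith

lemma isClosed_simplex (m : ℕ) : IsClosed (simplexS m) := by
  have : simplexS m = (⋂ i, {x : Fin m → ℝ | 0 ≤ x i}) ∩ {x | ∑ k, x k = 1} := by
    ext w; simp [simplexS, Set.mem_iInter]
  rw [this]
  exact (isClosed_iInter fun i => isClosed_le continuous_const (continuous_apply i)).inter
    (isClosed_eq (continuous_finset_sum _ fun i _ => (continuous_apply i)) continuous_const)

section
variable {m : ℕ} (F : (Fin m → ℝ) → (Fin m → ℝ))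
  (hFsop : ∀ x ∈ ballB m, ∀ i j, F x j ≤ F x i ↔ x j ≤ x i)
  (hFpos : ∀ x ∈ ballB m, ∀ k, 0 < F x k ∧ F x k ≤ 1)

include hFpos in
lemma inner_le_one {z : Fin m → ℝ} (hz : z ∈ simplexS m) : ∑ i, z i * F z i ≤ 1 := by
  calc ∑ i, z i * F z i ≤ ∑ i, z i * 1 :=
        Finset.sum_le_sum fun i _ => mul_le_mul_of_nonneg_left
          (hFpos z (simplex_mem_ball hz) i).2 (hz.1 i)
    _ = 1 := by simp [hz.2]

include hFpos in
lemma R_mem_simplex (R : (Fin m → ℝ) → (Fin m → ℝ))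
    (hR : ∀ x k, R x k = x k * (1 + F x k - ∑ i, x i * F x i))
    {z : Fin m → ℝ} (hz : z ∈ simplexS m) : R z ∈ simplexS m := by
  constructor
  · intro j
    rw [hR]
    have h1 := inner_le_one F hFpos hz
    have h2 := (hFpos z (simplex_mem_ball hz) j).1
    have := hz.1 j
    nlinarith
  · have : ∀ i, R z i = z i + z i * F z i - (∑ j, z j * F z j) * z i := by
      intro i; rw [hR]; ring
    rw [Finset.sum_congr rfl fun i _ => this i]
    rw [Finset.sum_sub_distrib, Finset.sum_add_distrib, ← Finset.mul_sum, hz.2]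
    ring

include hFsop in
lemma inner_le_Fk {z : Fin m → ℝ} (hz : z ∈ simplexS m) {k : Fin m} (hk : 1/2 < z k) :
    ∑ i, z i * F z i ≤ F z k := by
  have hle : ∀ i, F z i ≤ F z k := by
    intro i
    rcases eq_or_ne i k with rfl | hik
    · exact le_refl _
    · exact (hFsop z (simplex_mem_ball hz) k i).mpr
        (le_trans (coord_le_sub hz hik) (by linarith))
  calc ∑ i, z i * F z i ≤ ∑ i, z i * F z k :=
        Finset.sum_le_sum fun i _ => mul_le_mul_of_nonneg_left (hle i) (hz.1 i)
    _ = F z k := by rw [← Finset.sum_mul, hz.2, one_mul]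

include hFsop in
lemma inner_lt_Fk {z : Fin m → ℝ} (hz : z ∈ simplexS m) {k : Fin m} (hk : 1/2 < z k)
    (hk1 : z k < 1) : ∑ i, z i * F z i < F z k := by
  -- there is j ≠ k with z j > 0
  have hex : ∃ j, j ≠ k ∧ 0 < z j := by
    by_contra h
    push_neg at h
    have hsum : ∑ i, z i = z k := by
      rw [Finset.sum_eq_single k]
      · intro i _ hi
        exact le_antisymm (h i hi) (hz.1 i)
      · simp
    rw [hz.2] at hsum; linarith
  obtain ⟨j, hjk, hj⟩ := hex
  have hFlt : F z j < F z k := by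
    have hzjk : z j < z k := lt_of_le_of_lt (coord_le_sub hz hjk) (by linarith)
    by_contra hc
    push_neg at hc
    exact absurd ((hFsop z (simplex_mem_ball hz) j k).mp hc) (not_le.mpr hzjk)
  have hle : ∀ i, F z i ≤ F z k := by
    intro i
    rcases eq_or_ne i k with rfl | hik
    · exact le_refl _
    · exact (hFsop z (simplex_mem_ball hz) k i).mpr
        (le_trans (coord_le_sub hz hik) (by linarith))
  calc ∑ i, z i * F z i < ∑ i, z i * F z k := by
        apply Finset.sum_lt_sum
        · exact fun i _ => mul_le_mul_of_nonneg_left (hle i) (hz.1 i)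
        · exact ⟨j, Finset.mem_univ j, mul_lt_mul_of_pos_left hFlt hj⟩
    _ = F z k := by rw [← Finset.sum_mul, hz.2, one_mul]

include hFsop in
lemma Rk_ge (R : (Fin m → ℝ) → (Fin m → ℝ))
    (hR : ∀ x k, R x k = x k * (1 + F x k - ∑ i, x i * F x i))
    {z : Fin m → ℝ} (hz : z ∈ simplexS m) {k : Fin m} (hk : 1/2 < z k) :
    z k ≤ R z k := by
  rw [hR]
  have := inner_le_Fk F hFsop hz hk
  nlinarith

end

lemma sum_move {m : ℕ} (x : Fin m → ℝ) (f : Fin m → ℝ) {j k : Fin m} (hjk : j ≠ k) :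
    ∑ i, (Function.update (Function.update x j 0) k (x k + x j)) i * f i
      = ∑ i, x i * f i + x j * (f k - f j) := by
  have hy : ∀ i, (Function.update (Function.update x j 0) k (x k + x j)) i * f i
      = x i * f i + ((if i = k then x j * f k else 0) + (if i = j then -(x j * f j) else 0)) := by
    intro i
    rcases eq_or_ne i k with rfl | hik
    · simp [Function.update_apply, hjk.symm]
      ring
    · rcases eq_or_ne i j with rfl | hij
      · simp [Function.update_apply, hik]
      · simp [Function.update_apply, hik, hij]
  rw [Finset.sum_congr rfl fun i _ => hy i]
  rw [Finset.sum_add_distrib, Finset.sum_add_distrib]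
  simp [Finset.sum_ite_eq']
  ring


/-- every strictly Nash equilibrium of `R_S` is an asymptotically stable
rest point (both stable and attracting). -/
theorem stmt_3 (m : ℕ) (hm : 2 ≤ m)
    (F R : (Fin m → ℝ) → (Fin m → ℝ))
    (hFcont : ContinuousOn F (ballB m))
    (hFsop : ∀ x ∈ ballB m, ∀ i j, F x j ≤ F x i ↔ x j ≤ x i)
    (hFpos : ∀ x ∈ ballB m, ∀ k, 0 < F x k ∧ F x k ≤ 1)
    (hR : ∀ x k, R x k = x k * (1 + F x k - ∑ i, x i * F x i)) :
    ∀ x ∈ simplexS m,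
      (∀ y ∈ simplexS m, y ≠ x → ∑ k, y k * F x k < ∑ k, x k * F x k) →
      R x = x ∧
      (∀ U ∈ 𝓝[simplexS m] x, ∃ V ∈ 𝓝[simplexS m] x, V ⊆ U ∧
        ∀ y ∈ V ∩ simplexS m, ∀ n : ℕ, R^[n] y ∈ U) ∧
      (∃ V ∈ 𝓝[simplexS m] x, ∀ y ∈ V ∩ simplexS m,
        Tendsto (fun n => R^[n] y) atTop (𝓝 x)) := by
  intro x hx hNash
  -- choose the index of a maximal coordinate
  have hne : (Finset.univ : Finset (Fin m)).Nonempty := ⟨⟨0, by omega⟩, Finset.mem_univ _⟩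
  obtain ⟨k, -, hk⟩ := Finset.exists_max_image Finset.univ x hne
  -- x is the vertex e_k
  have hx0 : ∀ j, j ≠ k → x j = 0 := by
    intro j hjk
    by_contra h0
    have hxj : 0 < x j := lt_of_le_of_ne (hx.1 j) (Ne.symm h0)
    set y := Function.update (Function.update x j 0) k (x k + x j) with hy
    have hyx : y ≠ x := by
      intro he
      have : y j = x j := by rw [he]
      rw [hy, Function.update_of_ne hjk, Function.update_self] at this
      linarith
    have hymem : y ∈ simplexS m := by
      constructor
      · intro i
        rcases eq_or_ne i k with rfl | hik
        · simp [hy]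
          have := hx.1 i; linarith
        · rcases eq_or_ne i j with rfl | hij
          · simp [hy, Function.update_apply, hik]
          · simp [hy, Function.update_apply, hik, hij]
            exact hx.1 i
      · have := sum_move x (fun _ => (1:ℝ)) hjk
        simp only [mul_one, sub_self, mul_zero, add_zero] at this
        rw [hy, this, hx.2]
    have hlt := hNash y hymem hyx
    have hsum := sum_move x (F x) hjk
    rw [hsum] at hlt
    have hFle : F x j ≤ F x k := (hFsop x (simplex_mem_ball hx) k j).mpr (hk j (Finset.mem_univ j))
    nlinarith
  have hxk : x k = 1 := by
    have : ∑ i, x i = x k := by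
      rw [Finset.sum_eq_single k]
      · intro i _ hi; exact hx0 i hi
      · simp
    rw [hx.2] at this; linarith
  -- basic facts about x
  have hxmem := hx
  have hRx : R x = x := by
    have hinner : ∑ i, x i * F x i = F x k := by
      rw [Finset.sum_eq_single k (fun i _ hi => by rw [hx0 i hi]; ring) (by simp), hxk, one_mul]
    funext i
    rcases eq_or_ne i k with rfl | hik
    · rw [hR, hinner]; ring
    · rw [hR, hx0 i hik]; ring
  refine ⟨hRx, ?_, ?_⟩
  · -- stability
    intro U hU
    obtain ⟨ε, hε, hball⟩ := Metric.mem_nhdsWithin_iff.mp hU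
    set δ : ℝ := min (ε/2) (1/4) with hδdef
    have hδpos : 0 < δ := by positivity
    have hδ4 : δ ≤ 1/4 := min_le_right _ _
    have hδε : δ ≤ ε/2 := min_le_left _ _
    set V : Set (Fin m → ℝ) := {w | 1 - δ < w k} ∩ simplexS m with hV
    have hdist : ∀ w ∈ simplexS m, 1 - δ < w k → dist w x < ε := by
      intro w hw hwk
      have h1 : dist w x ≤ 1 - w k := by
        rw [dist_pi_le_iff (by linarith [coord_le_one hw k])]
        intro i
        rcases eq_or_ne i k with rfl | hik
        · rw [Real.dist_eq, hxk, abs_of_nonpos (by linarith [coord_le_one hw i])]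
          linarith
        · rw [Real.dist_eq, hx0 i hik, sub_zero, abs_of_nonneg (hw.1 i)]
          exact coord_le_sub hw hik
      linarith
    have hVsub : V ⊆ U := by
      rintro w ⟨hw1, hw2⟩
      exact hball ⟨Metric.mem_ball.mpr (hdist w hw2 hw1), hw2⟩
    refine ⟨V, ?_, hVsub, ?_⟩
    · apply mem_nhdsWithin.mpr
      refine ⟨{w | 1 - δ < w k}, isOpen_lt continuous_const (continuous_apply k), ?_, ?_⟩
      · simp only [Set.mem_setOf_eq, hxk]; linarith
      · intro w hw; exact ⟨hw.1, hw.2⟩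
    · rintro w ⟨⟨hw1, hw2⟩, -⟩ n
      apply hVsub
      induction n with
      | zero => exact ⟨hw1, hw2⟩
      | succ n ih =>
        obtain ⟨ih1, ih2⟩ := ih
        rw [Function.iterate_succ_apply']
        have ih1' : 1 - δ < (R^[n] w) k := ih1
        have hhalf : 1/2 < (R^[n] w) k := by linarith
        exact ⟨lt_of_lt_of_le ih1 (Rk_ge F hFsop R hR ih2 hhalf),
          R_mem_simplex F hFpos R hR ih2⟩
  · -- attracting
    set V : Set (Fin m → ℝ) := {w | 1/2 < w k} with hV
    have hVmem : V ∈ 𝓝[simplexS m] x := by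
      apply mem_nhdsWithin_of_mem_nhds
      exact (isOpen_lt continuous_const (continuous_apply k)).mem_nhds
        (by simp only [Set.mem_setOf_eq, hxk]; norm_num)
    refine ⟨V, hVmem, ?_⟩
    rintro y ⟨hyV, hy⟩
    have hyk : 1/2 < y k := hyV
    set z : ℕ → Fin m → ℝ := fun n => R^[n] y with hz
    set a : ℕ → ℝ := fun n => z n k with ha
    have hz0 : z 0 = y := by simp only [hz]; exact Function.iterate_zero_apply R y
    have hzsucc : ∀ n, z (n+1) = R (z n) := by
      intro n; simp only [hz]; exact Function.iterate_succ_apply' R n y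
    have ha' : ∀ n, a n = z n k := fun n => by rw [ha]
    clear_value z a
    show Tendsto z atTop (𝓝 x)
    have hzfacts : ∀ n, z n ∈ simplexS m ∧ 1/2 < a n := by
      intro n
      induction n with
      | zero => exact ⟨by rw [hz0]; exact hy, by rw [ha', hz0]; exact hyk⟩
      | succ n ih =>
        constructor
        · rw [hzsucc]; exact R_mem_simplex F hFpos R hR ih.1
        · have h1 := Rk_ge F hFsop R hR ih.1 (by rw [← ha' n]; exact ih.2)
          rw [ha', hzsucc]
          calc (1:ℝ)/2 < a n := ih.2
            _ = z n k := ha' n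
            _ ≤ R (z n) k := h1
    have hamono : Monotone a := by
      apply monotone_nat_of_le_succ
      intro n
      rw [ha' n, ha' (n+1), hzsucc]
      exact Rk_ge F hFsop R hR (hzfacts n).1 (by rw [← ha' n]; exact (hzfacts n).2)
    have hbdd : ∀ n, a n ≤ 1 := fun n => by
      rw [ha' n]; exact coord_le_one (hzfacts n).1 k
    have hbddA : BddAbove (Set.range a) := ⟨1, by rintro _ ⟨n, rfl⟩; exact hbdd n⟩
    set L : ℝ := ⨆ n, a n with hL
    have htendL : Tendsto a atTop (𝓝 L) := by
      rw [hL]; exact tendsto_atTop_ciSup hamono hbddA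
    have haL : ∀ n, a n ≤ L := fun n => by rw [hL]; exact le_ciSup hbddA n
    have hL1 : L ≤ 1 := by rw [hL]; exact ciSup_le hbdd
    clear_value L
    have hLhalf : 1/2 < L := lt_of_lt_of_le (hzfacts 0).2 (haL 0)
    -- L = 1
    have hLeq : L = 1 := by
      by_contra hne1
      have hLlt : L < 1 := lt_of_le_of_ne hL1 hne1
      set K : Set (Fin m → ℝ) := {w | w ∈ simplexS m ∧ a 0 ≤ w k ∧ w k ≤ L} with hK
      have hKsub : K ⊆ simplexS m := by intro w hw; exact hw.1
      have hKclosed : IsClosed K := by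
        have hKeq : K = simplexS m ∩ ({w | a 0 ≤ w k} ∩ {w | w k ≤ L}) := by
          ext w
          exact ⟨fun h => ⟨h.1, h.2.1, h.2.2⟩, fun h => ⟨h.1, h.2.1, h.2.2⟩⟩
        rw [hKeq]
        exact (isClosed_simplex m).inter
          ((isClosed_le continuous_const (continuous_apply k)).inter
            (isClosed_le (continuous_apply k) continuous_const))
      have hKcomp : IsCompact K := by
        apply IsCompact.of_isClosed_subset (isCompact_univ_pi fun _ => isCompact_Icc) hKclosed
        intro w hw
        simp only [Set.mem_univ_pi]
        exact fun i => ⟨(hw.1).1 i, coord_le_one hw.1 i⟩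
      have hKne : K.Nonempty := ⟨y, by rw [← hz0]; exact (hzfacts 0).1,
        by rw [← hz0, ← ha' 0], by rw [← hz0, ← ha' 0]; exact haL 0⟩
      set g : (Fin m → ℝ) → ℝ := fun w => F w k - ∑ i, w i * F w i with hg
      have hgcont : ContinuousOn g K := by
        rw [hg]
        have hsub : K ⊆ ballB m := fun w hw => simplex_mem_ball (hKsub hw)
        apply ContinuousOn.sub
        · exact ((continuous_apply k).comp_continuousOn hFcont).mono hsub
        · apply continuousOn_finset_sum
          intro i _
          exact ((continuous_apply i).continuousOn.mono hsub).mul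
            (((continuous_apply i).comp_continuousOn hFcont).mono hsub)
      obtain ⟨w0, hw0K, hw0min⟩ := hKcomp.exists_isMinOn hKne hgcont
      have hδpos : 0 < g w0 := by
        have h1 : 1/2 < w0 k := lt_of_lt_of_le (hzfacts 0).2 hw0K.2.1
        have h2 : w0 k < 1 := lt_of_le_of_lt hw0K.2.2 hLlt
        have h3 := inner_lt_Fk F hFsop hw0K.1 h1 h2
        rw [hg]; simp only []
        linarith
      have hgK : ∀ w ∈ K, g w0 ≤ g w := fun w hw => hw0min hw
      clear_value g
      have hzK : ∀ n, z n ∈ K := fun n => ⟨(hzfacts n).1,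
        by rw [← ha' n]; exact hamono (Nat.zero_le n),
        by rw [← ha' n]; exact haL n⟩
      have hstep : ∀ n, a n + g w0 / 2 ≤ a (n+1) := by
        intro n
        have h2 : a (n+1) = a n + a n * g (z n) := by
          rw [ha' (n+1), hzsucc, hR, hg, ha' n]
          simp only []
          ring
        have h3 := hgK (z n) (hzK n)
        have h4 : 1/2 < a n := (hzfacts n).2
        have h6 : (1/2) * g w0 ≤ a n * g (z n) :=
          mul_le_mul h4.le h3 hδpos.le (by linarith)
        linarith
      have hgrow : ∀ n : ℕ, a 0 + n * (g w0 / 2) ≤ a n := by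
        intro n
        induction n with
        | zero => simp
        | succ n ih =>
          have := hstep n
          push_cast
          push_cast at ih
          linarith
      obtain ⟨n, hn⟩ := exists_nat_gt ((1 - a 0) / (g w0 / 2))
      have hδ2 : 0 < g w0 / 2 := half_pos hδpos
      have h5 : 1 - a 0 < n * (g w0 / 2) := by
        rw [div_lt_iff₀ hδ2] at hn
        linarith
      have := hgrow n
      have := hbdd n
      linarith
    -- conclude coordinatewise convergence
    rw [hLeq] at htendL
    apply tendsto_pi_nhds.mpr
    intro i
    rcases eq_or_ne i k with rfl | hik
    · have : (fun n => z n i) = a := funext fun n => (ha' n).symm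
      rw [this, hxk]
      exact htendL
    · have h0 : Tendsto (fun n => 1 - a n) atTop (𝓝 0) := by
        have h0' : Tendsto (fun n => (1:ℝ) - a n) atTop (𝓝 (1 - 1)) :=
          Tendsto.sub tendsto_const_nhds htendL
        simpa using h0'
      rw [hx0 i hik]
      apply squeeze_zero (fun n => (hzfacts n).1.1 i)
        (fun n => by rw [ha' n]; exact coord_le_sub (hzfacts n).1 hik) h0
end

section
/- Any convergent orbit of the replicator map R_S starting from an interior point of the simplex converges to a Nash equilibrium: if x ∈ S^{m-1} has all coordinates strictly positive and the sequence R_S^{(n)}(x) converges to a point p ∈ S^{m-1}, then ⟨p, F(p)⟩ ≥ ⟨y, F(p)⟩ for all y ∈ S^{m-1}. -/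
open Filter Topology

/-- any convergent interior orbit of `R_S` converges to a Nash equilibrium. -/
theorem stmt_4 (m : ℕ) (hm : 2 ≤ m)
    (F R : (Fin m → ℝ) → (Fin m → ℝ))
    (hFcont : ContinuousOn F (ballB m))
    (hFsop : ∀ x ∈ ballB m, ∀ i j, F x j ≤ F x i ↔ x j ≤ x i)
    (hFpos : ∀ x ∈ ballB m, ∀ k, 0 < F x k ∧ F x k ≤ 1)
    (hR : ∀ x k, R x k = x k * (1 + F x k - ∑ i, x i * F x i)) :
    ∀ x ∈ simplexS m, (∀ k, 0 < x k) →
      ∀ p ∈ simplexS m, Tendsto (fun n => R^[n] x) atTop (𝓝 p) →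
      ∀ y ∈ simplexS m, ∑ k, y k * F p k ≤ ∑ k, p k * F p k := by
  intro x hx hxpos p hp hconv y hy
  have hsub : simplexS m ⊆ ballB m := fun z hz => ⟨hz.1, le_of_eq hz.2⟩
  set S : (Fin m → ℝ) → ℝ := fun z => ∑ i, z i * F z i with hSdef
  -- one step preserves the interior of the simplex
  have hstep : ∀ z, z ∈ simplexS m → (∀ k, 0 < z k) →
      (R z ∈ simplexS m ∧ ∀ k, 0 < R z k) := by
    intro z hz hzpos
    have hzB := hsub hz
    have hSle : S z ≤ 1 := by
      calc S z ≤ ∑ i, z i * 1 := Finset.sum_le_sum (fun i _ =>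
            mul_le_mul_of_nonneg_left (hFpos z hzB i).2 (hz.1 i))
        _ = 1 := by simpa using hz.2
    have hfac : ∀ k, 0 < 1 + F z k - S z := fun k => by
      have := (hFpos z hzB k).1; linarith
    have hpos : ∀ k, 0 < R z k := fun k => by
      rw [hR]; exact mul_pos (hzpos k) (hfac k)
    refine ⟨⟨fun k => (hpos k).le, ?_⟩, hpos⟩
    have hsum : ∑ k, R z k = (∑ k, z k) + (∑ k, z k * F z k) - (∑ k, z k) * S z := by
      rw [Finset.sum_mul]
      rw [← Finset.sum_add_distrib, ← Finset.sum_sub_distrib]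
      exact Finset.sum_congr rfl fun k _ => by rw [hR]; ring
    rw [hsum, hz.2]
    show 1 + S z - 1 * S z = 1
    ring
  have horb : ∀ n, R^[n] x ∈ simplexS m ∧ ∀ k, 0 < R^[n] x k := by
    intro n; induction n with
    | zero => exact ⟨hx, hxpos⟩
    | succ n ih => rw [Function.iterate_succ_apply']; exact hstep _ ih.1 ih.2
  suffices hkey : ∀ k, F p k ≤ S p by
    calc ∑ k, y k * F p k ≤ ∑ k, y k * S p := Finset.sum_le_sum
          (fun k _ => mul_le_mul_of_nonneg_left (hkey k) (hy.1 k))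
      _ = S p := by rw [← Finset.sum_mul, hy.2, one_mul]
      _ = ∑ k, p k * F p k := rfl
  intro k
  by_contra hcon
  push_neg at hcon
  set g : (Fin m → ℝ) → ℝ := fun z => F z k - S z with hgdef
  have hgp : 0 < g p := by simp only [hgdef]; linarith
  have hgc : ContinuousWithinAt g (ballB m) p := by
    have hFk : ∀ i : Fin m, ContinuousWithinAt (fun z => F z i) (ballB m) p :=
      fun i => (continuous_apply i).continuousAt.comp_continuousWithinAt
        (hFcont p (hsub hp))
    have hSc : ContinuousWithinAt S (ballB m) p := by
      have := tendsto_finset_sum (Finset.univ : Finset (Fin m))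
        (f := fun i (z : Fin m → ℝ) => z i * F z i)
        (a := fun i => p i * F p i) (x := 𝓝[ballB m] p)
        (fun i _ => ((continuous_apply i).continuousWithinAt).mul (hFk i))
      exact this
    exact (hFk k).sub hSc
  have htendW : Tendsto (fun n => R^[n] x) atTop (𝓝[ballB m] p) :=
    tendsto_nhdsWithin_iff.mpr ⟨hconv, Eventually.of_forall fun n => hsub (horb n).1⟩
  have htend : Tendsto (fun n => g (R^[n] x)) atTop (𝓝 (g p)) :=
    (hgc.tendsto).comp htendW
  have hev : ∀ᶠ n in atTop, g p / 2 < g (R^[n] x) :=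
    htend.eventually (eventually_gt_nhds (by linarith))
  obtain ⟨N, hN⟩ := eventually_atTop.mp hev
  have hgrow : ∀ n ≥ N, (1 + g p / 2) * (R^[n] x k) ≤ R^[n+1] x k := by
    intro n hn
    rw [Function.iterate_succ_apply', hR]
    have h1 := hN n hn
    have hpos := (horb n).2 k
    have h2 : R^[n] x k * (g p / 2) ≤ R^[n] x k * g (R^[n] x) :=
      mul_le_mul_of_nonneg_left h1.le hpos.le
    simp only [hgdef, hSdef] at h2 ⊢
    nlinarith [h2]
  have hmono : ∀ n ≥ N, R^[N] x k ≤ R^[n] x k := by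
    intro n hn
    induction n, hn using Nat.le_induction with
    | base => exact le_refl _
    | succ n hn ih =>
      have := hgrow n hn
      have hpos := (horb n).2 k
      nlinarith
  have hpk : Tendsto (fun n => R^[n] x k) atTop (𝓝 (p k)) :=
    ((continuous_apply k).tendsto p).comp hconv
  have hpkN : R^[N] x k ≤ p k :=
    ge_of_tendsto hpk (eventually_atTop.mpr ⟨N, hmono⟩)
  have ht1 : Tendsto (fun n => (1 + g p / 2) * (R^[n] x k)) atTop
      (𝓝 ((1 + g p / 2) * p k)) := hpk.const_mul _
  have ht2 : Tendsto (fun n => R^[n+1] x k) atTop (𝓝 (p k)) :=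
    hpk.comp (tendsto_add_atTop_nat 1)
  have hle : (1 + g p / 2) * p k ≤ p k :=
    le_of_tendsto_of_tendsto ht1 ht2 (eventually_atTop.mpr ⟨N, hgrow⟩)
  have hpos := (horb N).2 k
  nlinarith
end

section
/- The rest points of the replicator map R_S are exactly the centers of the faces of the simplex: a point x ∈ S^{m-1} satisfies R_S(x) = x if and only if x = c_α for some nonempty subset α ⊆ {1,…,m}, where c_α is the point with coordinates 1/|α| on α and 0 off α. -/
open Filter Topology

/-- the rest points of `R_S` are exactly the centers of the faces of the simplex. -/
theorem stmt_5 (m : ℕ) (hm : 2 ≤ m)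
    (F R : (Fin m → ℝ) → (Fin m → ℝ))
    (hFcont : ContinuousOn F (ballB m))
    (hFsop : ∀ x ∈ ballB m, ∀ i j, F x j ≤ F x i ↔ x j ≤ x i)
    (hFpos : ∀ x ∈ ballB m, ∀ k, 0 < F x k ∧ F x k ≤ 1)
    (hR : ∀ x k, R x k = x k * (1 + F x k - ∑ i, x i * F x i)) :
    ∀ x ∈ simplexS m,
      (R x = x ↔ ∃ α : Finset (Fin m), α.Nonempty ∧
        x = fun k => if k ∈ α then ((α.card : ℝ))⁻¹ else 0) := by
  intro x hx
  obtain ⟨hx0, hx1⟩ := hx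
  have hxB : x ∈ ballB m := ⟨hx0, le_of_eq hx1⟩
  set φ := ∑ i, x i * F x i with hφ
  constructor
  · intro hRx
    have hkey : ∀ k, x k * (F x k - φ) = 0 := by
      intro k
      have h := congrFun hRx k
      rw [hR] at h
      nlinarith [h]
    set α := Finset.univ.filter (fun k => x k ≠ 0) with hα
    have hzero : ∀ k, k ∉ α → x k = 0 := by
      intro k hk
      simp [hα] at hk
      exact hk
    have hsum : ∑ k ∈ α, x k = 1 := by
      rw [← hx1]
      exact Finset.sum_subset (Finset.subset_univ _) (fun k _ hk => hzero k hk)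
    have hne : α.Nonempty := by
      by_contra h
      rw [Finset.not_nonempty_iff_eq_empty] at h
      rw [h] at hsum
      simp at hsum
    have hF : ∀ k ∈ α, F x k = φ := by
      intro k hk
      simp [hα] at hk
      rcases mul_eq_zero.mp (hkey k) with h | h
      · exact absurd h hk
      · linarith
    obtain ⟨k0, hk0⟩ := hne
    have heq : ∀ k ∈ α, x k = x k0 := fun k hk =>
      le_antisymm ((hFsop x hxB k0 k).mp (by rw [hF k hk, hF k0 hk0]))
                  ((hFsop x hxB k k0).mp (by rw [hF k hk, hF k0 hk0]))
    have hcard : (α.card : ℝ) * x k0 = 1 := by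
      rw [← hsum, Finset.sum_congr rfl heq, Finset.sum_const, nsmul_eq_mul]
    have hcardne : (α.card : ℝ) ≠ 0 := by
      intro h
      rw [h, zero_mul] at hcard
      norm_num at hcard
    refine ⟨α, ⟨k0, hk0⟩, funext fun k => ?_⟩
    by_cases h : k ∈ α
    · simp only [h, if_true]
      rw [heq k h]
      field_simp
      linear_combination hcard
    · simp only [h, if_false]
      exact hzero k h
  · rintro ⟨α, ⟨k0, hk0⟩, rfl⟩
    set x : Fin m → ℝ := fun k => if k ∈ α then ((α.card : ℝ))⁻¹ else 0 with hxdef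
    have hxk : ∀ k ∈ α, x k = ((α.card : ℝ))⁻¹ := fun k hk => by simp [hxdef, hk]
    have hxk0 : ∀ k, k ∉ α → x k = 0 := fun k hk => by simp [hxdef, hk]
    have hFeq : ∀ k ∈ α, F x k = F x k0 := by
      intro k hk
      exact le_antisymm ((hFsop x hxB k0 k).mpr (by rw [hxk k hk, hxk k0 hk0]))
                        ((hFsop x hxB k k0).mpr (by rw [hxk k hk, hxk k0 hk0]))
    have hcardpos : 0 < (α.card : ℝ) := by
      have := Finset.card_pos.mpr ⟨k0, hk0⟩
      exact_mod_cast this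
    have hφval : φ = F x k0 := by
      rw [hφ]
      rw [← Finset.sum_subset (Finset.subset_univ α)
        (fun k _ hk => by rw [hxk0 k hk, zero_mul])]
      rw [Finset.sum_congr rfl (fun k hk => by rw [hxk k hk, hFeq k hk])]
      rw [Finset.sum_const, nsmul_eq_mul]
      field_simp
    funext k
    rw [hR]
    by_cases h : k ∈ α
    · rw [hFeq k h, ← hφ, hφval]
      ring
    · rw [hxk0 k h]
      ring
end

section
/- The Nash equilibria of the replicator map R_S are exactly the centers of the faces of the simplex: a point x ∈ S^{m-1} satisfies ⟨x, F(x)⟩ ≥ ⟨y, F(x)⟩ for all y ∈ S^{m-1} if and only if x = c_α for some nonempty subset α ⊆ {1,…,m}. -/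
open Filter Topology

/-- the Nash equilibria of `R_S` are exactly the centers of the faces
of the simplex. -/
theorem stmt_6 (m : ℕ) (hm : 2 ≤ m)
    (F R : (Fin m → ℝ) → (Fin m → ℝ))
    (hFcont : ContinuousOn F (ballB m))
    (hFsop : ∀ x ∈ ballB m, ∀ i j, F x j ≤ F x i ↔ x j ≤ x i)
    (hFpos : ∀ x ∈ ballB m, ∀ k, 0 < F x k ∧ F x k ≤ 1)
    (hR : ∀ x k, R x k = x k * (1 + F x k - ∑ i, x i * F x i)) :
    ∀ x ∈ simplexS m,
      ((∀ y ∈ simplexS m, ∑ k, y k * F x k ≤ ∑ k, x k * F x k) ↔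
        ∃ α : Finset (Fin m), α.Nonempty ∧
          x = fun k => if k ∈ α then ((α.card : ℝ))⁻¹ else 0) := by
  intro x hx
  obtain ⟨hx0, hx1⟩ := hx
  have hxB : x ∈ ballB m := ⟨hx0, le_of_eq hx1⟩
  haveI : NeZero m := ⟨by omega⟩
  constructor
  · intro hNash
    set α := Finset.univ.filter (fun k => x k ≠ 0) with hα
    have hmemα : ∀ k, k ∈ α ↔ x k ≠ 0 := by
      intro k; simp [hα]
    have hαne : α.Nonempty := by
      by_contra h
      rw [Finset.not_nonempty_iff_eq_empty] at h
      have hz : ∑ k, x k = 0 := Finset.sum_eq_zero (fun k _ => by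
        by_contra hk
        have : k ∈ α := (hmemα k).mpr hk
        simp [h] at this)
      linarith
    obtain ⟨i, _, hi⟩ := Finset.exists_max_image Finset.univ x Finset.univ_nonempty
    have hi' : ∀ k, x k ≤ x i := fun k => hi k (Finset.mem_univ k)
    -- x is constant (= x i) on its support
    have hconst : ∀ j, x j ≠ 0 → x j = x i := by
      intro j hj
      by_contra hne
      have hjlt : x j < x i := lt_of_le_of_ne (hi' j) hne
      have hFle : F x j ≤ F x i := (hFsop x hxB i j).mpr hjlt.le
      have hFlt : F x j < F x i := by
        rcases lt_or_eq_of_le hFle with h | h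
        · exact h
        · exact absurd ((hFsop x hxB j i).mp h.ge) (not_le.mpr hjlt)
      have hxj : 0 < x j := lt_of_le_of_ne (hx0 j) (Ne.symm hj)
      have hsum_lt : ∑ k, x k * F x k < F x i := by
        have h1 : ∑ k, x k * F x k < ∑ k, x k * F x i := by
          apply Finset.sum_lt_sum
          · intro k _
            exact mul_le_mul_of_nonneg_left ((hFsop x hxB i k).mpr (hi' k)) (hx0 k)
          · exact ⟨j, Finset.mem_univ j, by nlinarith⟩
        calc ∑ k, x k * F x k < ∑ k, x k * F x i := h1
          _ = (∑ k, x k) * F x i := by rw [Finset.sum_mul]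
          _ = F x i := by rw [hx1, one_mul]
      have hei : (fun k => if k = i then (1:ℝ) else 0) ∈ simplexS m := by
        constructor
        · intro k; dsimp only; split_ifs <;> norm_num
        · simp
      have := hNash _ hei
      have heval : ∑ k, (if k = i then (1:ℝ) else 0) * F x k = F x i := by
        rw [Finset.sum_eq_single i]
        · simp
        · intro b _ hb; simp [hb]
        · intro h; exact absurd (Finset.mem_univ i) h
      rw [heval] at this
      linarith
    have hi0 : x i ≠ 0 := by
      obtain ⟨j, hj⟩ := hαne
      have hj' := (hmemα j).mp hj
      have := hconst j hj'
      intro h; rw [h] at this; exact hj' this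
    have hcard : (α.card : ℝ) * x i = 1 := by
      have h1 : ∑ k ∈ α, x k = ∑ k, x k := by
        apply Finset.sum_filter_ne_zero
      have h2 : ∑ k ∈ α, x k = (α.card : ℝ) * x i := by
        rw [Finset.sum_congr rfl (fun k hk => hconst k ((hmemα k).mp hk))]
        rw [Finset.sum_const, nsmul_eq_mul]
      rw [← h2, h1, hx1]
    have hcne : (α.card : ℝ) ≠ 0 := by
      intro h; rw [h, zero_mul] at hcard; norm_num at hcard
    have hxi : x i = ((α.card : ℝ))⁻¹ := by
      field_simp
      linarith [hcard]
    refine ⟨α, hαne, ?_⟩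
    funext k
    by_cases hk : k ∈ α
    · simp only [hk, if_true]
      rw [← hxi]
      exact hconst k ((hmemα k).mp hk)
    · simp only [hk, if_false]
      have := (hmemα k).not.mp hk
      push_neg at this
      exact this
  · rintro ⟨α, hαne, hxe⟩
    obtain ⟨i0, hi0⟩ := hαne
    have hcpos : (0:ℝ) < (α.card : ℝ) := by
      exact_mod_cast Finset.card_pos.mpr ⟨i0, hi0⟩
    have hxk : ∀ k, x k = if k ∈ α then ((α.card : ℝ))⁻¹ else 0 := fun k => by
      rw [hxe]
    have hxi0 : x i0 = ((α.card : ℝ))⁻¹ := by rw [hxk i0, if_pos hi0]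
    have hFle : ∀ k, F x k ≤ F x i0 := by
      intro k
      apply (hFsop x hxB i0 k).mpr
      rw [hxk k, hxi0]
      split_ifs
      · exact le_refl _
      · positivity
    intro y hy
    obtain ⟨hy0, hy1⟩ := hy
    have hxF : ∑ k, x k * F x k = F x i0 := by
      have h1 : ∑ k, x k * F x k = ∑ k, x k * F x i0 := by
        apply Finset.sum_congr rfl
        intro k _
        by_cases hk : k ∈ α
        · have hFeq : F x k = F x i0 := by
            refine le_antisymm (hFle k) ((hFsop x hxB k i0).mpr ?_)
            rw [hxk k, hxi0, if_pos hk]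
          rw [hFeq]
        · rw [hxk k, if_neg hk, zero_mul, zero_mul]
      rw [h1, ← Finset.sum_mul, hx1, one_mul]
    rw [hxF]
    calc ∑ k, y k * F x k ≤ ∑ k, y k * F x i0 :=
          Finset.sum_le_sum (fun k _ => mul_le_mul_of_nonneg_left (hFle k) (hy0 k))
      _ = F x i0 := by rw [← Finset.sum_mul, hy1, one_mul]
end

section
/- The strictly Nash equilibria are exactly the vertices of the simplex: a point x ∈ S^{m-1} satisfies ⟨x, F(x)⟩ > ⟨y, F(x)⟩ for all y ∈ S^{m-1} with y ≠ x if and only if x = e_k for some k ∈ {1,…,m}, where e_k is the k-th standard basis vector. In particular, the face center c_α is not a strictly Nash equilibrium for any α with |α| ≥ 2. -/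
open Filter Topology

/-- the strictly Nash equilibria are exactly the vertices of the simplex;
in particular no face center `c_α` with `|α| ≥ 2` is a strictly Nash equilibrium. -/
theorem stmt_7 (m : ℕ) (hm : 2 ≤ m)
    (F R : (Fin m → ℝ) → (Fin m → ℝ))
    (hFcont : ContinuousOn F (ballB m))
    (hFsop : ∀ x ∈ ballB m, ∀ i j, F x j ≤ F x i ↔ x j ≤ x i)
    (hFpos : ∀ x ∈ ballB m, ∀ k, 0 < F x k ∧ F x k ≤ 1)
    (hR : ∀ x k, R x k = x k * (1 + F x k - ∑ i, x i * F x i)) :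
    (∀ x ∈ simplexS m,
      ((∀ y ∈ simplexS m, y ≠ x → ∑ k, y k * F x k < ∑ k, x k * F x k) ↔
        ∃ j : Fin m, x = fun i => if i = j then (1 : ℝ) else 0)) ∧
    (∀ α : Finset (Fin m), 2 ≤ α.card → ∀ c : Fin m → ℝ,
      (c = fun k => if k ∈ α then ((α.card : ℝ))⁻¹ else 0) →
      ¬ (∀ y ∈ simplexS m, y ≠ c → ∑ k, y k * F c k < ∑ k, c k * F c k)) := by
  have hsub : ∀ x ∈ simplexS m, x ∈ ballB m := fun x hx => ⟨hx.1, le_of_eq hx.2⟩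
  have main : ∀ x ∈ simplexS m,
      ((∀ y ∈ simplexS m, y ≠ x → ∑ k, y k * F x k < ∑ k, x k * F x k) ↔
        ∃ j : Fin m, x = fun i => if i = j then (1 : ℝ) else 0) := by
    intro x hx
    constructor
    · intro h
      by_contra hc
      push_neg at hc
      have hj : ∀ j : Fin m, F x j < ∑ k, x k * F x k := by
        intro j
        have hej : (fun i => if i = j then (1:ℝ) else 0) ∈ simplexS m := by
          constructor
          · intro k; by_cases h : k = j <;> simp [h]
          · simp
        have hne : (fun i => if i = j then (1:ℝ) else 0) ≠ x := fun he => hc j he.symm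
        have := h _ hej hne
        simpa using this
      obtain ⟨k0, hk0⟩ : ∃ k, 0 < x k := by
        by_contra hall
        push_neg at hall
        have hz : ∑ k, x k = 0 :=
          Finset.sum_eq_zero fun k _ => le_antisymm (hall k) (hx.1 k)
        rw [hx.2] at hz; norm_num at hz
      have hlt : ∑ k, x k * F x k < ∑ k, x k * (∑ i, x i * F x i) :=
        Finset.sum_lt_sum (fun i _ => mul_le_mul_of_nonneg_left (hj i).le (hx.1 i))
          ⟨k0, Finset.mem_univ k0, mul_lt_mul_of_pos_left (hj k0) hk0⟩
      rw [← Finset.sum_mul, hx.2, one_mul] at hlt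
      exact lt_irrefl _ hlt
    · rintro ⟨j, rfl⟩
      intro y hy hne
      set x : Fin m → ℝ := fun i => if i = j then (1:ℝ) else 0 with hxdef
      have hxB : x ∈ ballB m := hsub x hx
      have hFmax : ∀ k, F x k ≤ F x j := by
        intro k
        rw [hFsop x hxB j k]
        by_cases h : k = j <;> simp [x, h]
      have hFstrict : ∀ k, k ≠ j → F x k < F x j := by
        intro k hk
        rcases lt_or_eq_of_le (hFmax k) with h | h
        · exact h
        · exfalso
          have h1 := (hFsop x hxB k j).mp h.ge
          simp [x, hk] at h1
          linarith
      obtain ⟨i, hij, hi⟩ : ∃ i, i ≠ j ∧ 0 < y i := by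
        by_contra hall
        push_neg at hall
        have hzero : ∀ i, i ≠ j → y i = 0 := fun i h =>
          le_antisymm (hall i h) (hy.1 i)
        apply hne
        have hyj : y j = 1 := by
          have hs : ∑ k, y k = y j :=
            Finset.sum_eq_single j (fun b _ hb => hzero b hb)
              (fun h => absurd (Finset.mem_univ j) h)
          rw [← hs, hy.2]
        funext k
        by_cases hk : k = j
        · subst hk; simp [x, hyj]
        · simp [x, hk, hzero k hk]
      calc ∑ k, y k * F x k < ∑ k, y k * F x j :=
            Finset.sum_lt_sum (fun k _ => mul_le_mul_of_nonneg_left (hFmax k) (hy.1 k))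
              ⟨i, Finset.mem_univ i, mul_lt_mul_of_pos_left (hFstrict i hij) hi⟩
        _ = F x j := by rw [← Finset.sum_mul, hy.2, one_mul]
        _ = ∑ k, x k * F x k := by simp [x]
  refine ⟨main, ?_⟩
  intro α hα c hc h
  have hcS : c ∈ simplexS m := by
    subst hc
    constructor
    · intro k
      by_cases hk : k ∈ α <;> simp [hk]
    · rw [Finset.sum_ite_mem, Finset.univ_inter, Finset.sum_const, nsmul_eq_mul]
      have : (α.card : ℝ) ≠ 0 := by
        have : 0 < α.card := lt_of_lt_of_le (by norm_num) hα
        exact_mod_cast this.ne'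
      field_simp
  obtain ⟨j, hj⟩ := (main c hcS).mp h
  have h1 : c j = 1 := by rw [hj]; simp
  rw [hc] at h1
  by_cases hjα : j ∈ α
  · simp only [hjα, if_true] at h1
    have h2 : (α.card : ℝ) = 1 := inv_eq_one.mp h1
    have : α.card = 1 := by exact_mod_cast h2
    omega
  · simp [hjα] at h1
end

section
/- For every nonempty α ⊆ {1,…,m} and every k ∈ α, the function M_{α,k}(x) = max_{i∈α} x_i − x_k is an increasing Lyapunov function on the interior of the face S_α: for every x ∈ S^{m-1} with supp(x) = α one has M_{α,k}(R_S(x)) ≥ M_{α,k}(x), and moreover the set of maximal indices is preserved: {k ∈ α : (R_S(x))_k = max_{i∈α} (R_S(x))_i} = {k ∈ α : x_k = max_{i∈α} x_i}. -/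
open Filter Topology

/-- on the interior of each face `S_α`, the function
`M_{α,k}(x) = max_{i∈α} x_i − x_k` is an increasing Lyapunov function for `R_S`,
and the set of maximal indices is preserved. -/
theorem stmt_9 (m : ℕ) (hm : 2 ≤ m)
    (F R : (Fin m → ℝ) → (Fin m → ℝ))
    (hFcont : ContinuousOn F (ballB m))
    (hFsop : ∀ x ∈ ballB m, ∀ i j, F x j ≤ F x i ↔ x j ≤ x i)
    (hFpos : ∀ x ∈ ballB m, ∀ k, 0 < F x k ∧ F x k ≤ 1)
    (hR : ∀ x k, R x k = x k * (1 + F x k - ∑ i, x i * F x i)) :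
    ∀ α : Finset (Fin m), ∀ k : Fin m, ∀ hk : k ∈ α,
      ∀ x ∈ simplexS m, (∀ i, 0 < x i ↔ i ∈ α) →
      α.sup' ⟨k, hk⟩ x - x k ≤ α.sup' ⟨k, hk⟩ (R x) - R x k ∧
      {j | j ∈ α ∧ R x j = α.sup' ⟨k, hk⟩ (R x)} =
        {j | j ∈ α ∧ x j = α.sup' ⟨k, hk⟩ x} := by
  intro α k hk x hx hsupp
  obtain ⟨hx0, hx1⟩ := hx
  have hxB : x ∈ ballB m := ⟨hx0, hx1.le⟩
  set c := ∑ i, x i * F x i with hc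
  have hc1 : c ≤ 1 := by
    rw [hc]
    calc ∑ i, x i * F x i ≤ ∑ i, x i := Finset.sum_le_sum (fun i _ => by
            nlinarith [hx0 i, (hFpos x hxB i).2, (hFpos x hxB i).1])
      _ = 1 := hx1
  have hpos : ∀ i, 0 < 1 + F x i - c := fun i => by nlinarith [(hFpos x hxB i).1]
  have hmono : ∀ i j, x j ≤ x i → R x j ≤ R x i := by
    intro i j hij
    have hF : F x j ≤ F x i := (hFsop x hxB i j).2 hij
    rw [hR, hR]
    exact mul_le_mul hij (by linarith) (hpos j).le (hx0 i)
  have hstrict : ∀ i j, x j < x i → R x j < R x i := by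
    intro i j hij
    have hF : F x j < F x i := by
      by_contra h
      exact absurd ((hFsop x hxB j i).1 (not_lt.1 h)) (not_le.2 hij)
    rw [hR, hR]
    calc x j * (1 + F x j - c) ≤ x j * (1 + F x i - c) := by
            nlinarith [hx0 j]
      _ < x i * (1 + F x i - c) := by nlinarith [hpos i]
  have hiff : ∀ i j, R x j ≤ R x i ↔ x j ≤ x i := fun i j =>
    ⟨fun h => le_of_not_gt fun h' => absurd (hstrict j i h') (not_lt.2 h), hmono i j⟩
  obtain ⟨i0, hi0, hsup⟩ := Finset.exists_mem_eq_sup' ⟨k, hk⟩ x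
  have hxi0 : ∀ i, x i ≤ x i0 := by
    intro i
    by_cases hi : i ∈ α
    · exact hsup ▸ Finset.le_sup' x hi
    · have h1 : ¬ 0 < x i := fun h => hi ((hsupp i).1 h)
      have h2 : 0 < x i0 := (hsupp i0).2 hi0
      linarith [not_lt.1 h1]
  have hcF : c ≤ F x i0 := by
    calc c ≤ ∑ i, x i * F x i0 :=
          Finset.sum_le_sum fun i _ =>
            mul_le_mul_of_nonneg_left ((hFsop x hxB i0 i).2 (hxi0 i)) (hx0 i)
      _ = F x i0 := by rw [← Finset.sum_mul, hx1, one_mul]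
  have hsupR : α.sup' ⟨k, hk⟩ (R x) = R x i0 :=
    le_antisymm (Finset.sup'_le _ _ fun i _ => hmono i0 i (hxi0 i))
      (Finset.le_sup' (R x) hi0)
  have heq : ∀ j, R x j = R x i0 ↔ x j = x i0 := fun j =>
    ⟨fun h => le_antisymm ((hiff i0 j).1 h.le) ((hiff j i0).1 h.ge),
     fun h => le_antisymm (hmono i0 j h.le) (hmono j i0 h.ge)⟩
  constructor
  · rw [hsup, hsupR, hR, hR]
    have hFk : F x k ≤ F x i0 := (hFsop x hxB i0 k).2 (hxi0 k)
    nlinarith [mul_nonneg (sub_nonneg.2 (hxi0 k)) (sub_nonneg.2 hcF),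
      mul_nonneg (hx0 k) (sub_nonneg.2 hFk)]
  · ext j
    simp only [Set.mem_setOf_eq, hsup, hsupR]
    exact and_congr_right fun _ => heq j
end

section
/- Every orbit of the replicator map R_S starting in the interior of a face converges to the center of the sub-face spanned by the maximal coordinates of the initial point: for every nonempty α ⊆ {1,…,m} and every x ∈ S^{m-1} with supp(x) = α, the sequence R_S^{(n)}(x) converges as n → ∞ to c_β, where β = {k ∈ α : x_k = max_{i∈α} x_i} and c_β is the point with coordinates 1/|β| on β and 0 off β. -/
open Filter Topology

set_option maxHeartbeats 1000000 in
open scoped Classical in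
/-- every orbit of `R_S` starting in the interior of a face `S_α`
converges to the center of the sub-face spanned by the maximal coordinates of the
initial point. -/
theorem stmt_10 (m : ℕ) (hm : 2 ≤ m)
    (F R : (Fin m → ℝ) → (Fin m → ℝ))
    (hFcont : ContinuousOn F (ballB m))
    (hFsop : ∀ x ∈ ballB m, ∀ i j, F x j ≤ F x i ↔ x j ≤ x i)
    (hFpos : ∀ x ∈ ballB m, ∀ k, 0 < F x k ∧ F x k ≤ 1)
    (hR : ∀ x k, R x k = x k * (1 + F x k - ∑ i, x i * F x i)) :
    ∀ α : Finset (Fin m), ∀ hα : α.Nonempty,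
      ∀ x ∈ simplexS m, (∀ i, 0 < x i ↔ i ∈ α) →
      ∀ β : Finset (Fin m), β = α.filter (fun i => x i = α.sup' hα x) →
      Tendsto (fun n => R^[n] x) atTop
        (𝓝 (fun j => if j ∈ β then ((β.card : ℝ))⁻¹ else 0)) := by
  intro α hα x hx hsupp β hβ
  have hsub : simplexS m ⊆ ballB m := fun z hz => ⟨hz.1, hz.2.le⟩
  obtain ⟨i0, hi0α, hi0sup⟩ := Finset.exists_mem_eq_sup' hα x
  have hi0β : i0 ∈ β := by
    rw [hβ]; exact Finset.mem_filter.2 ⟨hi0α, hi0sup.symm⟩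
  have hx0 : 0 < x i0 := (hsupp i0).2 hi0α
  have hmax : ∀ i, x i ≤ x i0 := by
    intro i
    by_cases hi : i ∈ α
    · rw [← hi0sup]; exact Finset.le_sup' x hi
    · have : ¬ 0 < x i := fun h => hi ((hsupp i).1 h)
      have := hx.1 i
      nlinarith [hx0]
  have hlt : ∀ j ∈ α, j ∉ β → x j < x i0 := by
    intro j hjα hjβ
    rcases lt_or_eq_of_le (hmax j) with h | h
    · exact h
    · exact absurd (by rw [hβ]; exact Finset.mem_filter.2 ⟨hjα, by rw [h, hi0sup]⟩) hjβ
  -- the invariant predicate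
  set P : (Fin m → ℝ) → Prop := fun y =>
    y ∈ simplexS m ∧ (∀ i, 0 < y i ↔ i ∈ α) ∧ (∀ i ∈ β, y i = y i0) ∧
      (∀ j, y j ≤ y i0) ∧ (∀ j, y j * x i0 ≤ x j * y i0) with hP
  -- one-step lemma
  have step : ∀ y, P y → P (R y) ∧ y i0 ≤ R y i0 := by
    intro y hy
    obtain ⟨hyS, hysupp, hyβ, hymax, hyr⟩ := hy
    have hyB : y ∈ ballB m := hsub hyS
    set E : ℝ := ∑ i, y i * F y i with hE
    have hynn : ∀ k, 0 ≤ y k := hyS.1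
    have hFmax : ∀ k, F y k ≤ F y i0 := fun k => (hFsop y hyB i0 k).2 (hymax k)
    have hEle : E ≤ F y i0 := by
      calc E ≤ ∑ i, y i * F y i0 :=
            Finset.sum_le_sum fun i _ => mul_le_mul_of_nonneg_left (hFmax i) (hynn i)
        _ = F y i0 := by rw [← Finset.sum_mul, hyS.2, one_mul]
    have hE1 : E ≤ 1 := by
      calc E ≤ ∑ i, y i * 1 :=
            Finset.sum_le_sum fun i _ => mul_le_mul_of_nonneg_left (hFpos y hyB i).2 (hynn i)
        _ = 1 := by simp [hyS.2]
    have hg : ∀ k, 0 < 1 + F y k - E := by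
      intro k; have := (hFpos y hyB k).1; linarith
    have hRy : ∀ k, R y k = y k * (1 + F y k - E) := fun k => hR y k
    have hRnn : ∀ k, 0 ≤ R y k := fun k => by
      rw [hRy k]; exact mul_nonneg (hynn k) (hg k).le
    have hRsum : ∑ k, R y k = 1 := by
      have : ∀ k, R y k = y k + y k * F y k - y k * E := by
        intro k; rw [hRy k]; ring
      rw [Finset.sum_congr rfl fun k _ => this k, Finset.sum_sub_distrib,
        Finset.sum_add_distrib, ← Finset.sum_mul, hyS.2, ← hE]
      ring
    have hRmono : ∀ j k, y j ≤ y k → R y j ≤ R y k := by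
      intro j k hjk
      have hF : F y j ≤ F y k := (hFsop y hyB k j).2 hjk
      rw [hRy j, hRy k]
      exact mul_le_mul hjk (by linarith) (hg j).le (hynn k)
    have hRsupp : ∀ i, 0 < R y i ↔ i ∈ α := by
      intro i
      rw [← hysupp i, hRy i]
      constructor
      · intro h
        rcases (hynn i).lt_or_eq with h' | h'
        · exact h'
        · rw [← h'] at h; simp at h
      · intro h; exact mul_pos h (hg i)
    refine ⟨⟨⟨hRnn, hRsum⟩, hRsupp, ?_, fun j => hRmono j i0 (hymax j), ?_⟩, ?_⟩
    · intro i hi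
      have h1 : y i = y i0 := hyβ i hi
      have hF : F y i = F y i0 :=
        le_antisymm ((hFsop y hyB i0 i).2 h1.le) ((hFsop y hyB i i0).2 h1.ge)
      rw [hRy i, hRy i0, h1, hF]
    · intro j
      have h1 : y j * x i0 ≤ x j * y i0 := hyr j
      have hF : F y j ≤ F y i0 := hFmax j
      have hxj : 0 ≤ x j := hx.1 j
      calc R y j * x i0 = (y j * x i0) * (1 + F y j - E) := by rw [hRy j]; ring
        _ ≤ (x j * y i0) * (1 + F y i0 - E) :=
            mul_le_mul h1 (by linarith) (hg j).le (mul_nonneg hxj (hynn i0))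
        _ = x j * R y i0 := by rw [hRy i0]; ring
    · rw [hRy i0]
      nlinarith [hynn i0]
  set u : ℕ → (Fin m → ℝ) := fun n => R^[n] x with hu
  have hPn : ∀ n, P (u n) := by
    intro n
    induction n with
    | zero =>
      simp only [hu, Function.iterate_zero_apply]
      refine ⟨hx, hsupp, ?_, hmax, fun j => le_rfl⟩
      intro i hi
      rw [hβ] at hi
      obtain ⟨-, h⟩ := Finset.mem_filter.1 hi
      rw [h, hi0sup]
    | succ n ih =>
      have : u (n + 1) = R (u n) := Function.iterate_succ_apply' R n x
      rw [this]
      exact (step _ ih).1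
  set M : ℕ → ℝ := fun n => u n i0 with hM
  have hMmono : Monotone M := by
    apply monotone_nat_of_le_succ
    intro n
    have : u (n + 1) = R (u n) := Function.iterate_succ_apply' R n x
    rw [hM]; simp only []; rw [this]
    exact (step _ (hPn n)).2
  have hcoord1 : ∀ y ∈ simplexS m, ∀ k, y k ≤ 1 := by
    intro y hy k
    rw [← hy.2]
    exact Finset.single_le_sum (fun i _ => hy.1 i) (Finset.mem_univ k)
  have hMbdd : BddAbove (Set.range M) := by
    refine ⟨1, ?_⟩
    rintro _ ⟨n, rfl⟩
    exact hcoord1 _ (hPn n).1 i0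
  set Ms : ℝ := ⨆ n, M n with hMs
  have hMtend : Tendsto M atTop (𝓝 Ms) := tendsto_atTop_ciSup hMmono hMbdd
  have hMle : ∀ n, M n ≤ Ms := fun n => le_ciSup hMbdd n
  have hMspos : 0 < Ms := lt_of_lt_of_le hx0 (hMle 0)
  -- compactness of the simplex
  have hclosed : IsClosed (simplexS m) := by
    have : simplexS m =
        (⋂ k, {z : Fin m → ℝ | 0 ≤ z k}) ∩ ((fun z : Fin m → ℝ => ∑ k, z k) ⁻¹' {1}) := by
      ext z; simp [simplexS, Set.mem_iInter]
    rw [this]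
    exact IsClosed.inter (isClosed_iInter fun k =>
      isClosed_le continuous_const (continuous_apply k))
      (IsClosed.preimage (continuous_finset_sum _ fun k _ => continuous_apply k)
        isClosed_singleton)
  have hcpt : IsCompact (simplexS m) := by
    refine IsCompact.of_isClosed_subset (isCompact_Icc (a := (0 : Fin m → ℝ)) (b := 1))
      hclosed ?_
    intro z hz
    exact ⟨fun k => hz.1 k, fun k => hcoord1 z hz k⟩
  obtain ⟨y, hyS, φ, hφ, hyt⟩ := hcpt.tendsto_subseq (fun n => (hPn n).1)
  have hyB : y ∈ ballB m := hsub hyS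
  have hytc : ∀ k, Tendsto (fun n => u (φ n) k) atTop (𝓝 (y k)) := by
    intro k
    exact ((continuous_apply k).tendsto y).comp hyt
  -- β-coordinates of y equal Ms
  have hyβMs : ∀ i ∈ β, y i = Ms := by
    intro i hi
    have h1 : (fun n => u (φ n) i) = fun n => M (φ n) := by
      funext n; exact (hPn (φ n)).2.2.1 i hi
    have h2 : Tendsto (fun n => M (φ n)) atTop (𝓝 Ms) := hMtend.comp hφ.tendsto_atTop
    have h3 : Tendsto (fun n => u (φ n) i) atTop (𝓝 Ms) := by rw [h1]; exact h2
    exact tendsto_nhds_unique (hytc i) h3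
  have hylemax : ∀ k, y k ≤ Ms := by
    intro k
    refine le_of_tendsto (hytc k) (Eventually.of_forall fun n => ?_)
    exact le_trans ((hPn (φ n)).2.2.2.1 k) (hMle (φ n))
  -- continuity of the i0-coordinate of R
  have hFck : ∀ k, ContinuousOn (fun z => F z k) (ballB m) :=
    fun k => (continuous_apply k).comp_continuousOn hFcont
  have hcE : ContinuousOn (fun z : Fin m → ℝ => ∑ i, z i * F z i) (ballB m) :=
    continuousOn_finset_sum _ fun i _ => ((continuous_apply i).continuousOn).mul (hFck i)
  have hcRi0 : ContinuousOn (fun z : Fin m → ℝ =>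
      z i0 * (1 + F z i0 - ∑ i, z i * F z i)) (ballB m) :=
    ((continuous_apply i0).continuousOn).mul
      ((continuousOn_const.add (hFck i0)).sub hcE)
  have htin : Tendsto (fun n => u (φ n)) atTop (𝓝[ballB m] y) :=
    tendsto_nhdsWithin_of_tendsto_nhds_of_eventually_within _ hyt
      (Eventually.of_forall fun n => hsub (hPn (φ n)).1)
  have hRyi0 : R y i0 = Ms := by
    have hfeq : ∀ z, R z i0 = z i0 * (1 + F z i0 - ∑ i, z i * F z i) := fun z => hR z i0
    have h1 : Tendsto (fun n => R (u (φ n)) i0) atTop (𝓝 (R y i0)) := by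
      rw [hfeq y]
      refine Tendsto.congr (fun n => (hfeq _).symm) ?_
      exact Tendsto.comp (hcRi0 y hyB) htin
    have h2 : Tendsto (fun n => R (u (φ n)) i0) atTop (𝓝 Ms) := by
      have heq : (fun n => R (u (φ n)) i0) = fun n => M (φ n + 1) := by
        funext n
        have : u (φ n + 1) = R (u (φ n)) := Function.iterate_succ_apply' R (φ n) x
        simp only [hM]; rw [this]
      rw [heq]
      exact hMtend.comp (tendsto_atTop_mono (fun n => Nat.le_succ (φ n)) hφ.tendsto_atTop)
    exact tendsto_nhds_unique h1 h2
  have hyi0 : y i0 = Ms := hyβMs i0 hi0β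
  have hFEy : F y i0 = ∑ i, y i * F y i := by
    have h := hR y i0
    rw [hRyi0, hyi0] at h
    have h2 : 1 + F y i0 - ∑ i, y i * F y i = 1 :=
      mul_left_cancel₀ (ne_of_gt hMspos) (by rw [mul_one]; exact h.symm)
    linarith
  have hyposMs : ∀ i, 0 < y i → y i = Ms := by
    intro i hi
    have hFmaxy : ∀ k, F y k ≤ F y i0 := by
      intro k
      exact (hFsop y hyB i0 k).2 (by rw [hyi0]; exact hylemax k)
    have hsum0 : ∑ k, y k * (F y i0 - F y k) = 0 := by
      have : ∀ k, y k * (F y i0 - F y k) = y k * F y i0 - y k * F y k := fun k => by ring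
      rw [Finset.sum_congr rfl fun k _ => this k, Finset.sum_sub_distrib,
        ← Finset.sum_mul, hyS.2, one_mul, hFEy, sub_self]
    have hterm := (Finset.sum_eq_zero_iff_of_nonneg
      (fun k _ => mul_nonneg (hyS.1 k) (by linarith [hFmaxy k]))).1 hsum0 i (Finset.mem_univ i)
    have hF : F y i = F y i0 := by
      rcases mul_eq_zero.1 hterm with h | h
      · exact absurd h (ne_of_gt hi)
      · linarith [hFmaxy i]
    have : y i0 ≤ y i := (hFsop y hyB i i0).1 hF.ge
    rw [hyi0] at this
    exact le_antisymm (hylemax i) this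
  have hyoff : ∀ j, j ∉ β → y j = 0 := by
    intro j hj
    by_cases hjα : j ∈ α
    · by_contra h0
      have hjpos : 0 < y j := lt_of_le_of_ne (by
        exact le_of_tendsto_of_tendsto tendsto_const_nhds (hytc j)
          (Eventually.of_forall fun n => (hPn (φ n)).1.1 j)) (Ne.symm h0)
      have hyjMs : y j = Ms := hyposMs j hjpos
      have hrat : y j * x i0 ≤ x j * Ms := by
        refine le_of_tendsto_of_tendsto ((hytc j).mul_const (x i0))
          (tendsto_const_nhds.mul (hMtend.comp hφ.tendsto_atTop))
          (Eventually.of_forall fun n => ?_)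
        exact (hPn (φ n)).2.2.2.2 j
      rw [hyjMs] at hrat
      have : x i0 ≤ x j := le_of_mul_le_mul_left (by linarith [hrat]) hMspos
      exact absurd this (not_le.2 (hlt j hjα hj))
    · have hz : ∀ n, u (φ n) j = 0 := by
        intro n
        have h1 := (hPn (φ n)).2.1 j
        have h2 := (hPn (φ n)).1.1 j
        by_contra h
        exact hjα (h1.1 (lt_of_le_of_ne h2 (Ne.symm h)))
      have : Tendsto (fun n => u (φ n) j) atTop (𝓝 0) := by
        simp only [hz]; exact tendsto_const_nhds
      exact tendsto_nhds_unique (hytc j) this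
  have hcard : (β.card : ℝ) * Ms = 1 := by
    have h1 : ∑ k ∈ β, y k + ∑ k ∈ βᶜ, y k = 1 := by
      rw [Finset.sum_add_sum_compl]; exact hyS.2
    have h2 : ∑ k ∈ β, y k = (β.card : ℝ) * Ms := by
      rw [Finset.sum_congr rfl fun k hk => hyβMs k hk, Finset.sum_const, nsmul_eq_mul]
    have h3 : ∑ k ∈ βᶜ, y k = 0 :=
      Finset.sum_eq_zero fun k hk => hyoff k (Finset.mem_compl.1 hk)
    rw [h2, h3] at h1
    linarith
  have hMsval : Ms = ((β.card : ℝ))⁻¹ := by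
    have hcne : (β.card : ℝ) ≠ 0 := by
      have : 0 < β.card := Finset.card_pos.2 ⟨i0, hi0β⟩
      exact_mod_cast this.ne'
    field_simp
    linarith [hcard]
  -- final convergence
  rw [tendsto_pi_nhds]
  intro j
  by_cases hj : j ∈ β
  · simp only [hj, if_true]
    have h1 : (fun n => u n j) = M := by
      funext n; exact (hPn n).2.2.1 j hj
    show Tendsto (fun n => u n j) atTop (𝓝 ((β.card : ℝ))⁻¹)
    rw [h1, ← hMsval]
    exact hMtend
  · simp only [hj, if_false]
    show Tendsto (fun n => u n j) atTop (𝓝 0)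
    have hb : ∀ n, u n j ≤ 1 - (β.card : ℝ) * M n := by
      intro n
      have h1 : ∑ k ∈ β, u n k + ∑ k ∈ βᶜ, u n k = 1 := by
        rw [Finset.sum_add_sum_compl]; exact (hPn n).1.2
      have h2 : ∑ k ∈ β, u n k = (β.card : ℝ) * M n := by
        rw [Finset.sum_congr rfl fun k hk => (hPn n).2.2.1 k hk, Finset.sum_const,
          nsmul_eq_mul]
      have h3 : u n j ≤ ∑ k ∈ βᶜ, u n k :=
        Finset.single_le_sum (fun k _ => (hPn n).1.1 k) (Finset.mem_compl.2 hj)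
      linarith
    have hgt : Tendsto (fun n => 1 - (β.card : ℝ) * M n) atTop (𝓝 0) := by
      have : Tendsto (fun n => 1 - (β.card : ℝ) * M n) atTop (𝓝 (1 - (β.card : ℝ) * Ms)) :=
        tendsto_const_nhds.sub (hMtend.const_mul _)
      rw [hcard] at this
      simpa using this
    exact squeeze_zero (fun n => (hPn n).1.1 j) hb hgt
end

section
/- If the k-th coordinate of x ∈ S^{m-1} is maximal, i.e. x_k = max_{i} x_i, then (R_S(x))_k ≥ x_k and consequently ‖R_S(x) − e_k‖_1 ≤ ‖x − e_k‖_1, where ‖·‖_1 is the l_1-norm and e_k is the k-th standard basis vector. In particular, every vertex e_k of the simplex is a stable rest point of R_S. -/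
open Filter Topology

section Aux

variable {m : ℕ} {F R : (Fin m → ℝ) → (Fin m → ℝ)}

lemma aux_sub {x : Fin m → ℝ} (hx : x ∈ simplexS m) : x ∈ ballB m :=
  ⟨hx.1, hx.2.le⟩

lemma aux_coord_le_one {x : Fin m → ℝ} (hx : x ∈ simplexS m) (k : Fin m) : x k ≤ 1 := by
  have := Finset.single_le_sum (fun i _ => hx.1 i) (Finset.mem_univ k)
  rw [hx.2] at this; exact this

lemma aux_phi_le_one (hFpos : ∀ x ∈ ballB m, ∀ k, 0 < F x k ∧ F x k ≤ 1)
    {x : Fin m → ℝ} (hx : x ∈ simplexS m) : ∑ i, x i * F x i ≤ 1 := by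
  calc ∑ i, x i * F x i ≤ ∑ i, x i * 1 :=
        Finset.sum_le_sum fun i _ =>
          mul_le_mul_of_nonneg_left (hFpos x (aux_sub hx) i).2 (hx.1 i)
    _ = 1 := by simp [hx.2]

lemma aux_grow (hFsop : ∀ x ∈ ballB m, ∀ i j, F x j ≤ F x i ↔ x j ≤ x i)
    (hR : ∀ x k, R x k = x k * (1 + F x k - ∑ i, x i * F x i))
    {x : Fin m → ℝ} (hx : x ∈ simplexS m) (k : Fin m) (hk : ∀ i, x i ≤ x k) :
    x k ≤ R x k := by
  have hφ : ∑ i, x i * F x i ≤ F x k := by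
    calc ∑ i, x i * F x i ≤ ∑ i, x i * F x k :=
          Finset.sum_le_sum fun i _ =>
            mul_le_mul_of_nonneg_left ((hFsop x (aux_sub hx) k i).2 (hk i)) (hx.1 i)
      _ = F x k := by rw [← Finset.sum_mul, hx.2, one_mul]
  rw [hR]
  nlinarith [mul_nonneg (hx.1 k) (sub_nonneg.2 hφ)]

lemma aux_maps (hFpos : ∀ x ∈ ballB m, ∀ k, 0 < F x k ∧ F x k ≤ 1)
    (hR : ∀ x k, R x k = x k * (1 + F x k - ∑ i, x i * F x i))
    {x : Fin m → ℝ} (hx : x ∈ simplexS m) : R x ∈ simplexS m := by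
  have hφ1 : ∑ i, x i * F x i ≤ 1 := aux_phi_le_one hFpos hx
  constructor
  · intro i
    rw [hR]
    exact mul_nonneg (hx.1 i) (by nlinarith [(hFpos x (aux_sub hx) i).1])
  · have expand : ∀ k ∈ Finset.univ, R x k
        = x k + x k * F x k - x k * (∑ i, x i * F x i) := by
      intro k _; rw [hR]; ring
    rw [Finset.sum_congr rfl expand, Finset.sum_sub_distrib, Finset.sum_add_distrib,
      ← Finset.sum_mul, hx.2]
    ring

lemma aux_l1 (k : Fin m) {y : Fin m → ℝ} (hy : y ∈ simplexS m) :
    ∑ i, |y i - (if i = k then (1 : ℝ) else 0)| = 2 * (1 - y k) := by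
  have hk1 : y k ≤ 1 := aux_coord_le_one hy k
  have hterm : ∀ i, |y i - (if i = k then (1 : ℝ) else 0)|
      = y i + (if i = k then 1 - 2 * y k else 0) := by
    intro i
    by_cases h : i = k
    · subst h
      rw [if_pos rfl, if_pos rfl, abs_of_nonpos (by linarith)]
      ring
    · rw [if_neg h, if_neg h, sub_zero, add_zero, abs_of_nonneg (hy.1 i)]
  simp_rw [hterm, Finset.sum_add_distrib, Finset.sum_ite_eq' Finset.univ k, hy.2,
    Finset.mem_univ, if_true]
  ring

end Aux

/-- if the `k`-th coordinate of `x ∈ S^{m-1}` is maximal, then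
`(R_S x)_k ≥ x_k` and `‖R_S x − e_k‖_1 ≤ ‖x − e_k‖_1`; in particular every vertex
`e_k` is a stable rest point of `R_S`. -/
theorem stmt_11 (m : ℕ) (hm : 2 ≤ m)
    (F R : (Fin m → ℝ) → (Fin m → ℝ))
    (hFcont : ContinuousOn F (ballB m))
    (hFsop : ∀ x ∈ ballB m, ∀ i j, F x j ≤ F x i ↔ x j ≤ x i)
    (hFpos : ∀ x ∈ ballB m, ∀ k, 0 < F x k ∧ F x k ≤ 1)
    (hR : ∀ x k, R x k = x k * (1 + F x k - ∑ i, x i * F x i)) :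
    (∀ x ∈ simplexS m, ∀ k : Fin m, (∀ i, x i ≤ x k) →
      x k ≤ R x k ∧
      ∑ i, |R x i - (if i = k then (1 : ℝ) else 0)| ≤
        ∑ i, |x i - (if i = k then (1 : ℝ) else 0)|) ∧
    (∀ k : Fin m, ∀ e : Fin m → ℝ, (e = fun i => if i = k then (1 : ℝ) else 0) →
      R e = e ∧
      ∀ U ∈ 𝓝[simplexS m] e, ∃ V ∈ 𝓝[simplexS m] e, V ⊆ U ∧
        ∀ y ∈ V ∩ simplexS m, ∀ n : ℕ, R^[n] y ∈ U) := by
  constructor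
  · intro x hx k hk
    have h1 : x k ≤ R x k := aux_grow hFsop hR hx k hk
    refine ⟨h1, ?_⟩
    rw [aux_l1 k hx, aux_l1 k (aux_maps hFpos hR hx)]
    linarith
  · intro k e he
    have heS : e ∈ simplexS m := by
      subst he
      refine ⟨fun i => by positivity, ?_⟩
      simp [Finset.sum_ite_eq' Finset.univ k]
    have hRe : R e = e := by
      have hφe : ∑ j, e j * F e j = F e k := by
        have : ∀ j ∈ Finset.univ, e j * F e j = if j = k then F e j else 0 := by
          intro j _
          by_cases h : j = k
          · subst h; rw [he]; simp
          · rw [he]; simp [h]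
        rw [Finset.sum_congr rfl this, Finset.sum_ite_eq' Finset.univ k]
        simp
      funext i
      rw [hR, hφe]
      by_cases h : i = k
      · subst h; rw [he]; simp
      · rw [he]; simp [h]
    refine ⟨hRe, ?_⟩
    intro U hU
    obtain ⟨ε, hε, hball⟩ := Metric.mem_nhdsWithin_iff.1 hU
    set δ : ℝ := min ε (1/2) with hδdef
    have hδ : 0 < δ := lt_min hε (by norm_num)
    have hδε : δ ≤ ε := min_le_left _ _
    have hδhalf : δ ≤ 1/2 := min_le_right _ _
    refine ⟨Metric.ball e δ ∩ U, Filter.inter_mem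
      (nhdsWithin_le_nhds (Metric.ball_mem_nhds e hδ)) hU,
      Set.inter_subset_right, ?_⟩
    rintro y ⟨⟨hyb, _⟩, hyS⟩ n
    have hyk : 1 - δ < y k := by
      have h1 : dist (y k) (e k) ≤ dist y e := dist_le_pi_dist y e k
      rw [Metric.mem_ball] at hyb
      have h2 : |y k - 1| < δ := by
        have : e k = 1 := by rw [he]; simp
        rw [Real.dist_eq, this] at h1
        linarith
      have := abs_lt.1 h2
      linarith
    -- induction invariant
    have key : ∀ n : ℕ, R^[n] y ∈ simplexS m ∧ y k ≤ (R^[n] y) k := by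
      intro n
      induction n with
      | zero => exact ⟨hyS, le_refl _⟩
      | succ n ih =>
        obtain ⟨hw, hwk⟩ := ih
        set w := R^[n] y with hwdef
        have hwkhalf : 1/2 < w k := by linarith
        have hmax : ∀ i, w i ≤ w k := by
          intro i
          by_cases h : i = k
          · subst h; exact le_refl _
          · have hsum : w i + w k ≤ 1 := by
              have h1 : ∑ j ∈ ({i, k} : Finset (Fin m)), w j ≤ ∑ j, w j :=
                Finset.sum_le_sum_of_subset_of_nonneg (Finset.subset_univ _)
                  (fun j _ _ => hw.1 j)
              rw [Finset.sum_pair h, hw.2] at h1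
              exact h1
            linarith
        rw [Function.iterate_succ_apply']
        exact ⟨aux_maps hFpos hR hw,
          le_trans hwk (aux_grow hFsop hR hw k hmax)⟩
    obtain ⟨hw, hwk⟩ := key n
    set w := R^[n] y with hwdef
    apply hball
    refine ⟨?_, hw⟩
    rw [Metric.mem_ball]
    rw [dist_pi_lt_iff hε]
    intro i
    rw [Real.dist_eq]
    have hwk1 : w k ≤ 1 := aux_coord_le_one hw k
    by_cases h : i = k
    · subst h
      have : e i = 1 := by rw [he]; simp
      rw [this, abs_of_nonpos (by linarith)]
      linarith
    · have he0 : e i = 0 := by rw [he]; simp [h]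
      have hsum : w i + w k ≤ 1 := by
        have h1 : ∑ j ∈ ({i, k} : Finset (Fin m)), w j ≤ ∑ j, w j :=
          Finset.sum_le_sum_of_subset_of_nonneg (Finset.subset_univ _)
            (fun j _ _ => hw.1 j)
        rw [Finset.sum_pair h, hw.2] at h1
        exact h1
      rw [he0, sub_zero, abs_of_nonneg (hw.1 i)]
      linarith
end

section
/- For every subset α ⊆ {1,…,m} with |α| ≥ 2, the face center c_α is a rest point of the replicator map R_S that is not stable: there exists a neighborhood U of c_α in S^{m-1} such that every neighborhood V of c_α contains a point whose R_S-orbit leaves U. -/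
open Filter Topology

set_option maxHeartbeats 1000000

/-- for `|α| ≥ 2` the face center `c_α` is a rest point of `R_S`
which is not stable: some neighborhood `U` of `c_α` in the simplex is left by orbits
starting in every neighborhood `V` of `c_α`. -/
theorem stmt_12 (m : ℕ) (hm : 2 ≤ m)
    (F R : (Fin m → ℝ) → (Fin m → ℝ))
    (hFcont : ContinuousOn F (ballB m))
    (hFsop : ∀ x ∈ ballB m, ∀ i j, F x j ≤ F x i ↔ x j ≤ x i)
    (hFpos : ∀ x ∈ ballB m, ∀ k, 0 < F x k ∧ F x k ≤ 1)
    (hR : ∀ x k, R x k = x k * (1 + F x k - ∑ i, x i * F x i)) :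
    ∀ α : Finset (Fin m), 2 ≤ α.card → ∀ c : Fin m → ℝ,
      (c = fun k => if k ∈ α then ((α.card : ℝ))⁻¹ else 0) →
      R c = c ∧
      ∃ U ∈ 𝓝[simplexS m] c, ∀ V ∈ 𝓝[simplexS m] c,
        ∃ y ∈ V ∩ simplexS m, ∃ n : ℕ, R^[n] y ∉ U := by
  intro α hα c hc
  set φ : (Fin m → ℝ) → ℝ := fun x => ∑ i, x i * F x i with hφ
  clear_value φ
  have hφ' : ∀ z, φ z = ∑ i, z i * F z i := fun z => by rw [hφ]
  have hSB : simplexS m ⊆ ballB m := fun x hx => ⟨hx.1, le_of_eq hx.2⟩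
  -- φ ≤ 1 on the simplex
  have hφle : ∀ x ∈ simplexS m, φ x ≤ 1 := by
    intro x hx
    simp only [hφ]
    calc (∑ i, x i * F x i) ≤ ∑ i, x i * 1 := by
          apply Finset.sum_le_sum
          intro i _
          exact mul_le_mul_of_nonneg_left (hFpos x (hSB hx) i).2 (hx.1 i)
      _ = 1 := by simp [hx.2]
  have hpos : ∀ x ∈ simplexS m, ∀ k, 0 < 1 + F x k - φ x := by
    intro x hx k
    have := (hFpos x (hSB hx) k).1
    have := hφle x hx
    linarith
  -- R maps the simplex into itself
  have hRS : ∀ x ∈ simplexS m, R x ∈ simplexS m := by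
    intro x hx
    constructor
    · intro k
      rw [hR, ← hφ' x]
      exact mul_nonneg (hx.1 k) (hpos x hx k).le
    · have : ∑ k, R x k = ∑ k, (x k + x k * F x k - x k * φ x) := by
        apply Finset.sum_congr rfl
        intro k _
        rw [hR, ← hφ' x]; ring
      rw [this, Finset.sum_sub_distrib, Finset.sum_add_distrib, ← Finset.sum_mul, hx.2]
      simp [hφ]
  have hcard0 : (0:ℝ) < (α.card : ℝ) := by
    have : 0 < α.card := by omega
    exact_mod_cast this
  set a : ℝ := ((α.card : ℝ))⁻¹ with ha
  clear_value a
  have ha0 : 0 < a := by rw [ha]; exact inv_pos.mpr hcard0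
  have hck : ∀ k ∈ α, c k = a := by intro k hk; simp [hc, hk]
  have hck' : ∀ k, k ∉ α → c k = 0 := by intro k hk; simp [hc, hk]
  have hcS : c ∈ simplexS m := by
    constructor
    · intro k
      by_cases hk : k ∈ α
      · rw [hck k hk]; exact ha0.le
      · rw [hck' k hk]
    · have h1 : ∑ k, c k = ∑ k ∈ Finset.univ ∩ α, a := by
        rw [← Finset.sum_ite_mem]
        apply Finset.sum_congr rfl
        intro k _
        by_cases hk : k ∈ α <;> simp [hk, hck, hck']
      rw [h1, Finset.univ_inter, Finset.sum_const, nsmul_eq_mul, ha]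
      exact mul_inv_cancel₀ hcard0.ne'
  have hcB : c ∈ ballB m := hSB hcS
  -- F c is constant on α
  have hFeq : ∀ i ∈ α, ∀ k ∈ α, F c i = F c k := by
    intro i hi k hk
    have h1 : c i ≤ c k := by rw [hck i hi, hck k hk]
    have h2 : c k ≤ c i := by rw [hck i hi, hck k hk]
    exact le_antisymm ((hFsop c hcB k i).mpr h1) ((hFsop c hcB i k).mpr h2)
  -- rest point
  have hrest : R c = c := by
    funext k
    rw [hR]
    by_cases hk : k ∈ α
    · have hφc : (∑ i, c i * F c i) = F c k := by
        have : (∑ i, c i * F c i) = ∑ i ∈ α, a * F c k := by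
          rw [show (∑ i, c i * F c i) = ∑ i, if i ∈ α then a * F c i else 0 by
            apply Finset.sum_congr rfl
            intro i _
            by_cases hi : i ∈ α
            · simp [hi, hck i hi]
            · simp [hi, hck' i hi]]
          rw [Finset.sum_ite_mem, Finset.univ_inter]
          apply Finset.sum_congr rfl
          intro i hi
          rw [hFeq i hi k hk]
        rw [this, Finset.sum_const, nsmul_eq_mul, ← mul_assoc, ha,
          mul_inv_cancel₀ hcard0.ne', one_mul]
      rw [hφc]; ring
    · rw [hck' k hk]; ring
  refine ⟨hrest, ?_⟩
  -- instability
  set δ : ℝ := a / 2 with hδdef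
  clear_value δ
  have hδ0 : 0 < δ := by rw [hδdef]; linarith
  refine ⟨Metric.ball c δ, mem_nhdsWithin_of_mem_nhds (Metric.ball_mem_nhds c hδ0), ?_⟩
  intro V hV
  obtain ⟨ε, hε0, hεV⟩ := Metric.mem_nhdsWithin_iff.mp hV
  obtain ⟨i, hiα, j, hjα, hij⟩ := Finset.one_lt_card.mp (by omega : 1 < α.card)
  set t : ℝ := min (ε / 2) (a / 4) with htdef
  clear_value t
  have ht0 : 0 < t := by rw [htdef]; exact lt_min (by linarith) (by linarith)
  have htε : t < ε := by rw [htdef]; exact lt_of_le_of_lt (min_le_left _ _) (by linarith)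
  have hta : t < a / 2 := by rw [htdef]; exact lt_of_le_of_lt (min_le_right _ _) (by linarith)
  set y : Fin m → ℝ := fun k => c k + (if k = i then t else 0) - (if k = j then t else 0) with hy
  clear_value y
  have hyi : y i = a + t := by simp [hy, hij, hck i hiα]
  have hyj : y j = a - t := by simp [hy, Ne.symm hij, hck j hjα]
  have hyk : ∀ k, k ≠ i → k ≠ j → y k = c k := by intro k h1 h2; simp [hy, h1, h2]
  have hyS : y ∈ simplexS m := by
    constructor
    · intro k
      by_cases h1 : k = i
      · rw [h1, hyi]; linarith
      by_cases h2 : k = j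
      · rw [h2, hyj]; linarith
      · rw [hyk k h1 h2]; exact hcS.1 k
    · rw [hy]
      rw [Finset.sum_sub_distrib, Finset.sum_add_distrib, Finset.sum_ite_eq',
        Finset.sum_ite_eq']
      simp [hcS.2]
  have hdyc : ∀ k, dist (y k) (c k) ≤ t := by
    intro k
    by_cases h1 : k = i
    · rw [h1, hyi, hck i hiα, Real.dist_eq]; simp [abs_of_nonneg ht0.le]
    by_cases h2 : k = j
    · rw [h2, hyj, hck j hjα, Real.dist_eq]
      rw [show a - t - a = -t by ring, abs_neg, abs_of_nonneg ht0.le]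
    · rw [hyk k h1 h2]; simpa using ht0.le
  have hyV : y ∈ V := by
    apply hεV
    refine ⟨?_, hyS⟩
    rw [Metric.mem_ball, dist_pi_lt_iff hε0]
    intro k
    exact lt_of_le_of_lt (hdyc k) htε
  refine ⟨y, ⟨hyV, hyS⟩, ?_⟩
  -- the ratio r0
  have hat0 : 0 < a - t := by linarith
  set r0 : ℝ := (a + t) / (a - t) with hr0
  clear_value r0
  have hr01 : 1 < r0 := by
    rw [hr0, lt_div_iff₀ hat0]; linarith
  -- the compact set K
  set K : Set (Fin m → ℝ) :=
    {x | x ∈ Metric.closedBall c δ ∧ x ∈ simplexS m ∧ r0 * x j ≤ x i} with hK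
  have hKB : K ⊆ ballB m := fun x hx => hSB hx.2.1
  have hKbound : ∀ x ∈ K, a - δ ≤ x j ∧ x i ≤ a + δ := by
    intro x hx
    have hj := dist_le_pi_dist x c j
    have hi := dist_le_pi_dist x c i
    have hxd : dist x c ≤ δ := hx.1
    have hj' : dist (x j) (c j) ≤ δ := le_trans hj hxd
    have hi' : dist (x i) (c i) ≤ δ := le_trans hi hxd
    rw [Real.dist_eq, abs_le] at hj' hi'
    rw [hck j hjα] at hj'
    rw [hck i hiα] at hi'
    constructor <;> linarith [hj'.1, hi'.2]
  have hKj0 : ∀ x ∈ K, 0 < x j := by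
    intro x hx
    have := (hKbound x hx).1
    have : a - δ ≤ x j := this
    rw [hδdef] at this
    linarith
  have hKlt : ∀ x ∈ K, x j < x i := by
    intro x hx
    have h1 := hx.2.2
    have h2 := hKj0 x hx
    nlinarith
  -- the growth function g
  set g : (Fin m → ℝ) → ℝ := fun x => (1 + F x i - φ x) / (1 + F x j - φ x) with hg
  clear_value g
  have hgK : ∀ x ∈ K, 1 < g x := by
    intro x hx
    have hFlt : F x j < F x i := by
      by_contra h
      push_neg at h
      exact absurd ((hFsop x (hKB hx) j i).mp h) (not_le.mpr (hKlt x hx))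
    have hd := hpos x hx.2.1 j
    simp only [hg]
    rw [lt_div_iff₀ hd]
    linarith
  have hKclosed : IsClosed K := by
    have h1 : IsClosed (simplexS m) := by
      have he : simplexS m = (⋂ k, {x : Fin m → ℝ | 0 ≤ x k}) ∩ {x | ∑ k, x k = 1} := by
        ext x; simp [simplexS, Set.mem_iInter]
      rw [he]
      exact (isClosed_iInter fun k =>
        isClosed_le continuous_const (continuous_apply k)).inter
        (isClosed_eq (continuous_finset_sum _ fun k _ => continuous_apply k) continuous_const)
    have h2 : IsClosed {x : Fin m → ℝ | r0 * x j ≤ x i} :=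
      isClosed_le (continuous_const.mul (continuous_apply j)) (continuous_apply i)
    have he : K = Metric.closedBall c δ ∩ (simplexS m ∩ {x | r0 * x j ≤ x i}) := by
      ext x; simp [hK, Set.mem_inter_iff]
    rw [he]
    exact Metric.isClosed_closedBall.inter (h1.inter h2)
  have hKcompact : IsCompact K :=
    (isCompact_closedBall c δ).of_isClosed_subset hKclosed (fun x hx => hx.1)
  have hyK : y ∈ K := by
    refine ⟨?_, hyS, ?_⟩
    · rw [Metric.mem_closedBall, dist_pi_le_iff hδ0.le]
      intro k
      exact le_trans (hdyc k) (by rw [hδdef]; linarith)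
    · rw [hyi, hyj, hr0, div_mul_cancel₀]
      exact hat0.ne'
  -- continuity of g on K and its minimum
  have hφcont : ContinuousOn φ (ballB m) := by
    rw [hφ]
    apply continuousOn_finset_sum
    intro k _
    exact ((continuous_apply k).continuousOn).mul ((continuous_apply k).comp_continuousOn hFcont)
  have hgcont : ContinuousOn g K := by
    rw [hg]
    apply ContinuousOn.div
    · exact (continuousOn_const.add ((continuous_apply i).comp_continuousOn (hFcont.mono hKB))).sub (hφcont.mono hKB)
    · exact (continuousOn_const.add ((continuous_apply j).comp_continuousOn (hFcont.mono hKB))).sub (hφcont.mono hKB)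
    · intro x hx
      exact (hpos x hx.2.1 j).ne'
  obtain ⟨x₀, hx₀K, hx₀min⟩ := hKcompact.exists_isMinOn ⟨y, hyK⟩ hgcont
  set C : ℝ := g x₀ with hC
  clear_value C
  have hC1 : 1 < C := by rw [hC]; exact hgK x₀ hx₀K
  have hCg : ∀ x ∈ K, C ≤ g x := by
    intro x hx
    rw [hC]
    exact hx₀min hx
  -- suppose the orbit stays in the ball
  by_contra hcon
  push_neg at hcon
  have hall : ∀ n, R^[n] y ∈ Metric.ball c δ := hcon
  -- inductive invariant
  have hmain : ∀ n, R^[n] y ∈ K ∧ C ^ n * r0 * (R^[n] y j) ≤ R^[n] y i := by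
    intro n
    induction n with
    | zero =>
      refine ⟨hyK, ?_⟩
      simp only [Function.iterate_zero, id_eq, pow_zero, one_mul]
      exact hyK.2.2
    | succ n ih =>
      obtain ⟨hxK, hxr⟩ := ih
      set x : Fin m → ℝ := R^[n] y with hx
      clear_value x
      have hxS : x ∈ simplexS m := hxK.2.1
      have hRx : R^[n+1] y = R x := by rw [hx, Function.iterate_succ_apply']
      have hA : 0 < 1 + F x i - φ x := hpos x hxS i
      have hB : 0 < 1 + F x j - φ x := hpos x hxS j
      have hxj : 0 < x j := hKj0 x hxK
      have hxi : 0 < x i := lt_trans hxj (hKlt x hxK)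
      have hCB : C * (1 + F x j - φ x) ≤ 1 + F x i - φ x := by
        have := hCg x hxK
        simp only [hg] at this
        rw [le_div_iff₀ hB] at this
        linarith [this]
      have hRi : R x i = x i * (1 + F x i - φ x) := by simp only [hφ]; exact hR x i
      have hRj : R x j = x j * (1 + F x j - φ x) := by simp only [hφ]; exact hR x j
      have hstep : C ^ (n+1) * r0 * (R x j) ≤ R x i := by
        rw [hRi, hRj, pow_succ]
        have h1 : C ^ n * r0 * x j * (1 + F x j - φ x) ≤ x i * (1 + F x j - φ x) :=
          mul_le_mul_of_nonneg_right hxr hB.le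
        have hC0 : (0:ℝ) ≤ C := by linarith
        nlinarith [mul_le_mul_of_nonneg_left h1 hC0, mul_le_mul_of_nonneg_left hCB hxi.le]
      have hball : R x ∈ Metric.ball c δ := by rw [← hRx]; exact hall (n+1)
      have hCn1 : (1:ℝ) ≤ C ^ (n+1) := one_le_pow₀ hC1.le
      have hRj0 : 0 ≤ R x j := (hRS x hxS).1 j
      have hr00 : (0:ℝ) ≤ r0 := by linarith
      have hlast : r0 * R x j ≤ C ^ (n+1) * r0 * R x j :=
        mul_le_mul_of_nonneg_right (le_mul_of_one_le_left hr00 hCn1) hRj0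
      rw [hRx]
      exact ⟨⟨Metric.ball_subset_closedBall hball, hRS x hxS, le_trans hlast hstep⟩, hstep⟩
  -- derive the contradiction
  obtain ⟨N, hN⟩ := pow_unbounded_of_one_lt (3 : ℝ) hC1
  obtain ⟨hNK, hNr⟩ := hmain N
  have hb := hKbound _ hNK
  have hj1 : a - δ ≤ R^[N] y j := hb.1
  have hi1 : R^[N] y i ≤ a + δ := hb.2
  have hδa : a - δ = a / 2 := by rw [hδdef]; ring
  have h1 : C ^ N * r0 * (a / 2) ≤ a + δ := by
    calc C ^ N * r0 * (a / 2) ≤ C ^ N * r0 * (R^[N] y j) := by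
          apply mul_le_mul_of_nonneg_left (hδa ▸ hj1)
          have hC0 : (0:ℝ) ≤ C := by linarith
          have hr00 : (0:ℝ) ≤ r0 := by linarith
          exact mul_nonneg (pow_nonneg hC0 N) hr00
      _ ≤ R^[N] y i := hNr
      _ ≤ a + δ := hi1
  have hr0ge : 1 ≤ r0 := hr01.le
  have : C ^ N * (a / 2) ≤ a + δ := by nlinarith [pow_pos (lt_trans one_pos hC1) N, ha0]
  rw [hδdef] at this
  nlinarith [ha0, hN]
end

section
/- The fixed points of the zero-sum replicator map R_H on the two-dimensional simplex are exactly the three vertices e_1 = (1,0,0), e_2 = (0,1,0), e_3 = (0,0,1) and the center c = (1/3,1/3,1/3): R_H(x) = x for x ∈ S² if and only if x ∈ {e_1, e_2, e_3, c}. In particular, the only fixed points on the boundary {x ∈ S² : x_1 x_2 x_3 = 0} are the vertices, and the only interior fixed point is c. -/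
/-!
Writing `f = F x`, the equation `R_H(x) = x` says `x i * (x (i+1) * f i - x (i+2) * f (i+2)) = 0`
for each `i` (mod 3). If some coordinate vanishes, the next equation leaves
`x (i+1) * x (i+2) * f (i+1) = 0`, so a second coordinate vanishes since `f > 0`, and `x` is a
vertex. In the interior the equations become `x (i+1) * f i = x (i+2) * f (i+2)`; comparing them at
a maximal coordinate, where `f` is maximal too by similar ordering, shows that all coordinates
are equal, so `x = c`. Conversely the vertices and `c` (where `F` is constant) are fixed.
-/

open Filter Topology

/-- The two-dimensional standard simplex `S²` in `ℝ³`. -/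
def simplex2 : Set (Fin 3 → ℝ) :=
  {x | (∀ k, 0 ≤ x k) ∧ x 0 + x 1 + x 2 = 1}

/-- The part `B³_+` of the unit `l_1`-ball lying in the positive orthant of `ℝ³`. -/
def ball3 : Set (Fin 3 → ℝ) :=
  {x | (∀ k, 0 ≤ x k) ∧ x 0 + x 1 + x 2 ≤ 1}

/-- The fixed-point equations of `R_H` at `x`, with `f = F x` and indices read cyclically. -/
def IsRestPoint (x f : Fin 3 → ℝ) : Prop :=
  ∀ i : Fin 3, x i * (x (i + 1) * f i - x (i + 2) * f (i + 2)) = 0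

lemma Fin3.add_two_add_one (i : Fin 3) : i + 2 + 1 = i := by fin_cases i <;> rfl

lemma Fin3.add_one_add_two (i : Fin 3) : i + 1 + 2 = i := by fin_cases i <;> rfl

lemma Fin3.add_two_add_two (i : Fin 3) : i + 2 + 2 = i + 1 := by fin_cases i <;> rfl

lemma eq_iff_isRestPoint {y x f : Fin 3 → ℝ}
    (hy : ∀ i, y i = x i * (1 + x (i + 1) * f i - x (i + 2) * f (i + 2))) :
    y = x ↔ IsRestPoint x f := by
  simp only [funext_iff, IsRestPoint, hy]
  refine forall_congr' fun i => ⟨fun h => ?_, fun h => ?_⟩ <;> linear_combination h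

lemma isRestPoint_of_mul_succ_eq_zero {x : Fin 3 → ℝ} (f : Fin 3 → ℝ)
    (hx : ∀ i, x i * x (i + 1) = 0) : IsRestPoint x f := by
  intro i
  have h2 : x (i + 2) * x (i + 2 + 1) = 0 := hx (i + 2)
  rw [Fin3.add_two_add_one] at h2
  linear_combination f i * hx i - f (i + 2) * h2

lemma isRestPoint_of_const {x f : Fin 3 → ℝ} (hsim : ∀ i j, f j ≤ f i ↔ x j ≤ x i)
    (hx : ∀ i j, x i = x j) : IsRestPoint x f := by
  have hf : ∀ i j, f i = f j := fun i j =>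
    le_antisymm ((hsim j i).2 (hx i j).le) ((hsim i j).2 (hx i j).ge)
  intro i
  rw [hx (i + 1) (i + 2), hf i (i + 2), sub_self, mul_zero]

lemma mul_succ_eq_zero_of_isRestPoint {x f : Fin 3 → ℝ} (hf : ∀ i, 0 < f i)
    (hrest : IsRestPoint x f) {k : Fin 3} (hk : x k = 0) (i : Fin 3) : x i * x (i + 1) = 0 := by
  have h := hrest (k + 1)
  rw [Fin3.add_one_add_two, hk, zero_mul, sub_zero, ← mul_assoc] at h
  have hk12 : x (k + 1) * x (k + 1 + 1) = 0 :=
    (mul_eq_zero.1 h).resolve_right (hf _).ne'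
  obtain ⟨d, rfl⟩ : ∃ d, i = k + d := ⟨i - k, (add_sub_cancel k i).symm⟩
  fin_cases d
  · simp [hk]
  · exact hk12
  · simp [Fin3.add_two_add_one, hk]

lemma eq_of_forall_le_of_cyclic {x f : Fin 3 → ℝ} (hx : ∀ i, 0 ≤ x i) (hf : ∀ i, 0 < f i)
    (hsim : ∀ i j, f j ≤ f i ↔ x j ≤ x i)
    (hcyc : ∀ i, x (i + 1) * f i = x (i + 2) * f (i + 2)) {k : Fin 3}
    (hk : ∀ j, x j ≤ x k) : x (k + 1) = x k ∧ x (k + 2) = x k := by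
  have e₁ := hcyc k
  have e₂ := hcyc (k + 2)
  rw [Fin3.add_two_add_one, Fin3.add_two_add_two] at e₂
  have h₂₁ : x (k + 2) ≤ x (k + 1) := by
    by_contra! h
    have hlt : x (k + 1) * f (k + 1) < x k * f (k + 2) := calc
      x (k + 1) * f (k + 1) ≤ x (k + 1) * f (k + 2) :=
        mul_le_mul_of_nonneg_left ((hsim _ _).2 h.le) (hx _)
      _ < x (k + 2) * f (k + 2) := mul_lt_mul_of_pos_right h (hf _)
      _ ≤ x k * f (k + 2) := mul_le_mul_of_nonneg_right (hk _) (hf _).le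
    exact hlt.ne' e₂
  have h₁₂ : x (k + 1) ≤ x (k + 2) := by
    by_contra! h
    have hlt : x (k + 2) * f (k + 2) < x (k + 1) * f k := calc
      x (k + 2) * f (k + 2) ≤ x (k + 2) * f k :=
        mul_le_mul_of_nonneg_left ((hsim _ _).2 (hk _)) (hx _)
      _ < x (k + 1) * f k := mul_lt_mul_of_pos_right h (hf _)
    exact hlt.ne' e₁
  have hx₁₂ : x (k + 1) = x (k + 2) := le_antisymm h₁₂ h₂₁
  have hf₁₂ : f (k + 1) = f (k + 2) := le_antisymm ((hsim _ _).2 h₁₂) ((hsim _ _).2 h₂₁)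
  rw [← hf₁₂] at e₂
  have hx₁₀ : x (k + 1) = x k := (mul_right_cancel₀ (hf (k + 1)).ne' e₂).symm
  exact ⟨hx₁₀, hx₁₂.symm.trans hx₁₀⟩

lemma const_of_cyclic {x f : Fin 3 → ℝ} (hx : ∀ i, 0 ≤ x i) (hf : ∀ i, 0 < f i)
    (hsim : ∀ i j, f j ≤ f i ↔ x j ≤ x i)
    (hcyc : ∀ i, x (i + 1) * f i = x (i + 2) * f (i + 2)) (i j : Fin 3) : x i = x j := by
  obtain ⟨k, hk⟩ := Finite.exists_max x
  obtain ⟨h₁, h₂⟩ := eq_of_forall_le_of_cyclic hx hf hsim hcyc hk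
  suffices ∀ i, x i = x k from (this i).trans (this j).symm
  intro i
  obtain ⟨d, rfl⟩ : ∃ d, i = k + d := ⟨i - k, (add_sub_cancel k i).symm⟩
  fin_cases d
  exacts [congrArg x (add_zero k), h₁, h₂]

lemma eq_vec3 {x : Fin 3 → ℝ} {a b c : ℝ} (h₀ : x 0 = a) (h₁ : x 1 = b) (h₂ : x 2 = c) :
    x = ![a, b, c] := by
  ext i; fin_cases i <;> assumption

lemma eq_vertex_of_mul_succ_eq_zero {x : Fin 3 → ℝ} (hx : x ∈ simplex2)
    (hmul : ∀ i, x i * x (i + 1) = 0) :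
    x = ![1, 0, 0] ∨ x = ![0, 1, 0] ∨ x = ![0, 0, 1] := by
  obtain ⟨-, hsum⟩ := hx
  have h₀₁ : x 0 * x 1 = 0 := hmul 0
  have h₁₂ : x 1 * x 2 = 0 := hmul 1
  have h₂₀ : x 2 * x 0 = 0 := hmul 2
  rcases mul_eq_zero.1 h₀₁ with h₀ | h₁
  · rcases mul_eq_zero.1 h₁₂ with h₁ | h₂
    · exact .inr <| .inr <| eq_vec3 h₀ h₁ (by linarith)
    · exact .inr <| .inl <| eq_vec3 h₀ (by linarith) h₂
  · rcases mul_eq_zero.1 h₂₀ with h₂ | h₀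
    · exact .inl <| eq_vec3 (by linarith) h₁ h₂
    · exact .inr <| .inr <| eq_vec3 h₀ h₁ (by linarith)

lemma eq_center_of_const {x : Fin 3 → ℝ} (hx : x ∈ simplex2) (hconst : ∀ i j, x i = x j) :
    x = ![1/3, 1/3, 1/3] := by
  have hsum := hx.2
  rw [hconst 1 0, hconst 2 0] at hsum
  exact eq_vec3 (by linarith) (by linarith [hconst 1 0]) (by linarith [hconst 2 0])

theorem isRestPoint_iff {x f : Fin 3 → ℝ} (hx : x ∈ simplex2) (hf : ∀ i, 0 < f i)
    (hsim : ∀ i j, f j ≤ f i ↔ x j ≤ x i) :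
    IsRestPoint x f ↔ x = ![1, 0, 0] ∨ x = ![0, 1, 0] ∨ x = ![0, 0, 1] ∨
      x = ![1/3, 1/3, 1/3] := by
  constructor
  · intro hrest
    by_cases hzero : ∃ k, x k = 0
    · obtain ⟨k, hk⟩ := hzero
      have := eq_vertex_of_mul_succ_eq_zero hx (mul_succ_eq_zero_of_isRestPoint hf hrest hk)
      tauto
    · replace hzero := not_exists.1 hzero
      have hcyc : ∀ i, x (i + 1) * f i = x (i + 2) * f (i + 2) := fun i =>
        sub_eq_zero.1 ((mul_eq_zero.1 (hrest i)).resolve_left (hzero i))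
      exact Or.inr <| Or.inr <| Or.inr <|
        eq_center_of_const hx (const_of_cyclic hx.1 hf hsim hcyc)
  · rintro (rfl | rfl | rfl | rfl)
    iterate 3
      exact isRestPoint_of_mul_succ_eq_zero f (fun i => by fin_cases i <;> simp)
    exact isRestPoint_of_const hsim (fun i j => by fin_cases i <;> fin_cases j <;> rfl)

theorem stmt_14_general
    (F R : (Fin 3 → ℝ) → (Fin 3 → ℝ))
    (hFsop : ∀ x ∈ ball3, ∀ i j, F x j ≤ F x i ↔ x j ≤ x i)
    (hFpos : ∀ x ∈ ball3, ∀ k, 0 < F x k ∧ F x k ≤ 1)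
    (hR0 : ∀ x, R x 0 = x 0 * (1 + x 1 * F x 0 - x 2 * F x 2))
    (hR1 : ∀ x, R x 1 = x 1 * (1 + x 2 * F x 1 - x 0 * F x 0))
    (hR2 : ∀ x, R x 2 = x 2 * (1 + x 0 * F x 2 - x 1 * F x 1)) :
    (∀ x ∈ simplex2,
      (R x = x ↔ x = ![1, 0, 0] ∨ x = ![0, 1, 0] ∨ x = ![0, 0, 1] ∨
        x = ![1/3, 1/3, 1/3])) ∧
    (∀ x ∈ simplex2, x 0 * x 1 * x 2 = 0 →
      (R x = x ↔ x = ![1, 0, 0] ∨ x = ![0, 1, 0] ∨ x = ![0, 0, 1])) ∧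
    (∀ x ∈ simplex2, (∀ k, 0 < x k) →
      (R x = x ↔ x = ![1/3, 1/3, 1/3])) := by
  have hR : ∀ x i, R x i = x i * (1 + x (i + 1) * F x i - x (i + 2) * F x (i + 2)) := by
    intro x i
    fin_cases i
    exacts [hR0 x, hR1 x, hR2 x]
  have hfix : ∀ x ∈ simplex2, (R x = x ↔ x = ![1, 0, 0] ∨ x = ![0, 1, 0] ∨ x = ![0, 0, 1] ∨
      x = ![1/3, 1/3, 1/3]) := by
    intro x hx
    have hxb : x ∈ ball3 := ⟨hx.1, hx.2.le⟩
    rw [eq_iff_isRestPoint (hR x)]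
    exact isRestPoint_iff hx (fun k => (hFpos x hxb k).1) (hFsop x hxb)
  refine ⟨hfix, fun x hx hprod => ?_, fun x hx hpos => ?_⟩
  · have hc : x ≠ ![1/3, 1/3, 1/3] := by rintro rfl; norm_num [Matrix.cons_val_two] at hprod
    rw [hfix x hx]
    tauto
  · have h₁ : x ≠ ![1, 0, 0] := by rintro rfl; simpa using hpos 1
    have h₂ : x ≠ ![0, 1, 0] := by rintro rfl; simpa using hpos 0
    have h₃ : x ≠ ![0, 0, 1] := by rintro rfl; simpa using hpos 0
    rw [hfix x hx]
    tauto

/-- the fixed points of the zero-sum replicator map `R_H` on `S²`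
are exactly the three vertices and the center `c = (1/3,1/3,1/3)`; in particular the
only boundary fixed points are the vertices and the only interior fixed point is `c`. -/
theorem stmt_14
    (F R : (Fin 3 → ℝ) → (Fin 3 → ℝ))
    (hFdiff : ContDiffOn ℝ 1 F ball3)
    (hFsop : ∀ x ∈ ball3, ∀ i j, F x j ≤ F x i ↔ x j ≤ x i)
    (hFpos : ∀ x ∈ ball3, ∀ k, 0 < F x k ∧ F x k ≤ 1)
    (hR0 : ∀ x, R x 0 = x 0 * (1 + x 1 * F x 0 - x 2 * F x 2))
    (hR1 : ∀ x, R x 1 = x 1 * (1 + x 2 * F x 1 - x 0 * F x 0))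
    (hR2 : ∀ x, R x 2 = x 2 * (1 + x 0 * F x 2 - x 1 * F x 1)) :
    (∀ x ∈ simplex2,
      (R x = x ↔ x = ![1, 0, 0] ∨ x = ![0, 1, 0] ∨ x = ![0, 0, 1] ∨
        x = ![1/3, 1/3, 1/3])) ∧
    (∀ x ∈ simplex2, x 0 * x 1 * x 2 = 0 →
      (R x = x ↔ x = ![1, 0, 0] ∨ x = ![0, 1, 0] ∨ x = ![0, 0, 1])) ∧
    (∀ x ∈ simplex2, (∀ k, 0 < x k) →
      (R x = x ↔ x = ![1/3, 1/3, 1/3])) :=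
  stmt_14_general F R hFsop hFpos hR0 hR1 hR2
end

section
/- Define ξ(x) = x_1 x_2 x_3 and ζ(x) = (1 + x_2 f_1(x) − x_3 f_3(x))(1 + x_3 f_2(x) − x_1 f_1(x))(1 + x_1 f_3(x) − x_2 f_2(x)). Then for every x ∈ S²: ξ(R_H(x)) = ξ(x) ζ(x), ζ(x) ≤ 1, and ζ(x) = 1 if and only if x = c. In particular ξ(R_H(x)) ≤ ξ(x), so ξ is a decreasing Lyapunov function for R_H, strictly decreasing along interior orbits away from c. -/
/-!
Write `p, q, r` for the three factors of `ζ(x)`, so that `ξ(R_H(x)) = ξ(x) p q r` by expanding.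
Each factor is nonnegative on the simplex because `f_k ≤ 1`, and
`p + q + r = 3 - (Σ x_i f_i - (x₂f₁ + x₃f₂ + x₁f₃))`, which is at most `3` by the rearrangement
inequality: `x` and `F(x)` are similarly ordered. AM–GM then gives `pqr ≤ 1`. Equality forces
equality in the rearrangement inequality for a cyclic shift, which for a strictly similarly
ordered pair of triples happens only when `x` is constant, i.e. `x = c`.
-/

open Filter Topology

/-- `ζ(x) = lyapunovFactor x (F x)`. -/
def lyapunovFactor (x b : Fin 3 → ℝ) : ℝ :=
  (1 + x 1 * b 0 - x 2 * b 2) * (1 + x 2 * b 1 - x 0 * b 0) * (1 + x 0 * b 2 - x 1 * b 1)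

lemma mul_mul_le_add_add_div_three_pow {p q r : ℝ} (hp : 0 ≤ p) (hq : 0 ≤ q) (hr : 0 ≤ r) :
    p * q * r ≤ ((p + q + r) / 3) ^ 3 := by
  nlinarith [mul_nonneg (add_nonneg (add_nonneg hp hq) hr)
      (add_nonneg (add_nonneg (sq_nonneg (p - q)) (sq_nonneg (q - r))) (sq_nonneg (r - p))),
    mul_nonneg hp (sq_nonneg (q - r)), mul_nonneg hq (sq_nonneg (r - p)),
    mul_nonneg hr (sq_nonneg (p - q))]

lemma monovary_of_forall_le_iff {ι α β : Type*} [LinearOrder α] [LinearOrder β]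
    {f : ι → α} {g : ι → β} (h : ∀ i j, g j ≤ g i ↔ f j ≤ f i) : Monovary f g :=
  fun i j hij => (not_le.1 (mt (h i j).2 (not_le.2 hij))).le

lemma eq_of_monovary_comp_finRotate_three {α : Type*} [LinearOrder α] {a : Fin 3 → α}
    (h : Monovary (a ∘ finRotate 3) a) : a 0 = a 1 ∧ a 1 = a 2 := by
  have h01 := @h 0 1
  have h10 := @h 1 0
  have h12 := @h 1 2
  have h21 := @h 2 1
  have h02 := @h 0 2
  have h20 := @h 2 0
  simp only [Function.comp_apply, finRotate_apply, Fin.reduceAdd] at h01 h10 h12 h21 h02 h20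
  have h10' : a 1 ≤ a 0 := not_lt.1 fun hlt => (h02 (hlt.trans_le (h01 hlt))).not_gt hlt
  have h21' : a 2 ≤ a 1 := not_lt.1 fun hlt => (h10 (hlt.trans_le (h12 hlt))).not_gt hlt
  have h02' : a 0 ≤ a 2 := not_lt.1 fun hlt => (h21 (hlt.trans_le (h20 hlt))).not_gt hlt
  exact ⟨le_antisymm (h02'.trans h21') h10', le_antisymm (h10'.trans h02') h21'⟩

section CyclicRearrangement

variable {a b : Fin 3 → ℝ}

lemma cyclic_sum_le_of_monovary (h : Monovary a b) :
    a 1 * b 0 + a 2 * b 1 + a 0 * b 2 ≤ a 0 * b 0 + a 1 * b 1 + a 2 * b 2 := by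
  simpa [Fin.sum_univ_three] using h.sum_comp_perm_mul_le_sum_mul (σ := finRotate 3)

lemma eq_of_cyclic_sum_eq (h : ∀ i j, b j ≤ b i ↔ a j ≤ a i)
    (heq : a 1 * b 0 + a 2 * b 1 + a 0 * b 2 = a 0 * b 0 + a 1 * b 1 + a 2 * b 2) :
    a 0 = a 1 ∧ a 1 = a 2 := by
  have hrot : Monovary (a ∘ finRotate 3) b :=
    ((monovary_of_forall_le_iff h).sum_comp_perm_mul_eq_sum_mul_iff (σ := finRotate 3)).1
      (by simpa [Fin.sum_univ_three] using heq)
  exact eq_of_monovary_comp_finRotate_three fun i j hij =>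
    hrot (not_le.1 (mt (h i j).1 (not_le.2 hij)))

end CyclicRearrangement

lemma le_one_of_mem_simplex2 {x : Fin 3 → ℝ} (hx : x ∈ simplex2) (k : Fin 3) : x k ≤ 1 := by
  obtain ⟨hnn, hsum⟩ := hx
  fin_cases k <;> simp <;> linarith [hnn 0, hnn 1, hnn 2]

lemma eq_center_of_mem_simplex2 {x : Fin 3 → ℝ} (hx : x ∈ simplex2) (h01 : x 0 = x 1)
    (h12 : x 1 = x 2) : x = ![1/3, 1/3, 1/3] := by
  funext k
  fin_cases k <;> simp <;> linarith [hx.2]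

section LyapunovFactor

variable {x b : Fin 3 → ℝ}

lemma one_add_mul_sub_mul_nonneg {s t u v : ℝ} (hs : 0 ≤ s) (ht : 0 ≤ t) (hu : u ≤ 1)
    (hv₀ : 0 ≤ v) (hv₁ : v ≤ 1) : 0 ≤ 1 + s * t - u * v := by
  nlinarith [mul_nonneg hs ht, mul_le_mul_of_nonneg_left hv₁ hv₀]

lemma lyapunovFactor_factors_nonneg (hx : x ∈ simplex2) (hb : ∀ k, 0 ≤ b k ∧ b k ≤ 1) :
    0 ≤ 1 + x 1 * b 0 - x 2 * b 2 ∧ 0 ≤ 1 + x 2 * b 1 - x 0 * b 0 ∧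
      0 ≤ 1 + x 0 * b 2 - x 1 * b 1 :=
  ⟨one_add_mul_sub_mul_nonneg (hx.1 1) (hb 0).1 (le_one_of_mem_simplex2 hx 2) (hb 2).1 (hb 2).2,
    one_add_mul_sub_mul_nonneg (hx.1 2) (hb 1).1 (le_one_of_mem_simplex2 hx 0) (hb 0).1 (hb 0).2,
    one_add_mul_sub_mul_nonneg (hx.1 0) (hb 2).1 (le_one_of_mem_simplex2 hx 1) (hb 1).1 (hb 1).2⟩

lemma lyapunovFactor_le_one (hx : x ∈ simplex2) (hb : ∀ k, 0 ≤ b k ∧ b k ≤ 1)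
    (hord : ∀ i j, b j ≤ b i ↔ x j ≤ x i) : lyapunovFactor x b ≤ 1 := by
  obtain ⟨hp, hq, hr⟩ := lyapunovFactor_factors_nonneg hx hb
  have hsum := cyclic_sum_le_of_monovary (monovary_of_forall_le_iff hord)
  calc lyapunovFactor x b ≤ (((1 + x 1 * b 0 - x 2 * b 2) + (1 + x 2 * b 1 - x 0 * b 0)
        + (1 + x 0 * b 2 - x 1 * b 1)) / 3) ^ 3 := mul_mul_le_add_add_div_three_pow hp hq hr
    _ ≤ 1 := pow_le_one₀ (by positivity) (by linarith)

lemma eq_center_of_lyapunovFactor_eq_one (hx : x ∈ simplex2) (hb : ∀ k, 0 ≤ b k ∧ b k ≤ 1)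
    (hord : ∀ i j, b j ≤ b i ↔ x j ≤ x i) (h : lyapunovFactor x b = 1) :
    x = ![1/3, 1/3, 1/3] := by
  obtain ⟨hp, hq, hr⟩ := lyapunovFactor_factors_nonneg hx hb
  set s := (1 + x 1 * b 0 - x 2 * b 2) + (1 + x 2 * b 1 - x 0 * b 0)
    + (1 + x 0 * b 2 - x 1 * b 1)
  have hmean : 1 ≤ (s / 3) ^ 3 := h ▸ mul_mul_le_add_add_div_three_pow hp hq hr
  have hs : 1 ≤ s / 3 := (one_le_pow_iff_of_nonneg (by positivity) three_ne_zero).1 hmean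
  have hsum := cyclic_sum_le_of_monovary (monovary_of_forall_le_iff hord)
  obtain ⟨h01, h12⟩ := eq_of_cyclic_sum_eq hord (by linarith)
  exact eq_center_of_mem_simplex2 hx h01 h12

lemma lyapunovFactor_center_eq_one (h01 : b 0 = b 1) (h12 : b 1 = b 2) :
    lyapunovFactor ![1/3, 1/3, 1/3] b = 1 := by
  simp [lyapunovFactor, h01, h12]

end LyapunovFactor

theorem stmt_15_general
    (F R : (Fin 3 → ℝ) → (Fin 3 → ℝ))
    (hFsop : ∀ x ∈ ball3, ∀ i j, F x j ≤ F x i ↔ x j ≤ x i)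
    (hFpos : ∀ x ∈ ball3, ∀ k, 0 < F x k ∧ F x k ≤ 1)
    (hR0 : ∀ x, R x 0 = x 0 * (1 + x 1 * F x 0 - x 2 * F x 2))
    (hR1 : ∀ x, R x 1 = x 1 * (1 + x 2 * F x 1 - x 0 * F x 0))
    (hR2 : ∀ x, R x 2 = x 2 * (1 + x 0 * F x 2 - x 1 * F x 1)) :
    ∀ x ∈ simplex2, ∀ z : ℝ,
      z = (1 + x 1 * F x 0 - x 2 * F x 2) * (1 + x 2 * F x 1 - x 0 * F x 0) *
          (1 + x 0 * F x 2 - x 1 * F x 1) →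
      R x 0 * R x 1 * R x 2 = (x 0 * x 1 * x 2) * z ∧
      z ≤ 1 ∧ (z = 1 ↔ x = ![1/3, 1/3, 1/3]) ∧
      R x 0 * R x 1 * R x 2 ≤ x 0 * x 1 * x 2 := by
  intro x hx z hz
  have hxb : x ∈ ball3 := ⟨hx.1, hx.2.le⟩
  have hb k : 0 ≤ F x k ∧ F x k ≤ 1 := ⟨(hFpos x hxb k).1.le, (hFpos x hxb k).2⟩
  have hord := hFsop x hxb
  have hz1 : z ≤ 1 := hz ▸ lyapunovFactor_le_one hx hb hord
  have hξ : R x 0 * R x 1 * R x 2 = (x 0 * x 1 * x 2) * z := by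
    rw [hR0, hR1, hR2, hz]
    ring
  refine ⟨hξ, hz1,
    ⟨fun h => eq_center_of_lyapunovFactor_eq_one hx hb hord (hz.symm.trans h), ?_⟩, ?_⟩
  · rintro rfl
    have hF i j : F ![1/3, 1/3, 1/3] i = F ![1/3, 1/3, 1/3] j :=
      le_antisymm ((hord j i).2 (by fin_cases i <;> fin_cases j <;> simp))
        ((hord i j).2 (by fin_cases i <;> fin_cases j <;> simp))
    exact hz ▸ lyapunovFactor_center_eq_one (hF 0 1) (hF 1 2)
  · rw [hξ]
    exact mul_le_of_le_one_right (mul_nonneg (mul_nonneg (hx.1 0) (hx.1 1)) (hx.1 2)) hz1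

/-- with `ξ(x) = x₁x₂x₃` and
`ζ(x) = (1 + x₂f₁ − x₃f₃)(1 + x₃f₂ − x₁f₁)(1 + x₁f₃ − x₂f₂)` one has
`ξ(R_H(x)) = ξ(x)ζ(x)`, `ζ(x) ≤ 1` with equality iff `x = c`; in particular
`ξ(R_H(x)) ≤ ξ(x)`, so `ξ` is a decreasing Lyapunov function for `R_H`. -/
theorem stmt_15
    (F R : (Fin 3 → ℝ) → (Fin 3 → ℝ))
    (hFdiff : ContDiffOn ℝ 1 F ball3)
    (hFsop : ∀ x ∈ ball3, ∀ i j, F x j ≤ F x i ↔ x j ≤ x i)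
    (hFpos : ∀ x ∈ ball3, ∀ k, 0 < F x k ∧ F x k ≤ 1)
    (hR0 : ∀ x, R x 0 = x 0 * (1 + x 1 * F x 0 - x 2 * F x 2))
    (hR1 : ∀ x, R x 1 = x 1 * (1 + x 2 * F x 1 - x 0 * F x 0))
    (hR2 : ∀ x, R x 2 = x 2 * (1 + x 0 * F x 2 - x 1 * F x 1)) :
    ∀ x ∈ simplex2, ∀ z : ℝ,
      z = (1 + x 1 * F x 0 - x 2 * F x 2) * (1 + x 2 * F x 1 - x 0 * F x 0) *
          (1 + x 0 * F x 2 - x 1 * F x 1) →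
      R x 0 * R x 1 * R x 2 = (x 0 * x 1 * x 2) * z ∧
      z ≤ 1 ∧ (z = 1 ↔ x = ![1/3, 1/3, 1/3]) ∧
      R x 0 * R x 1 * R x 2 ≤ x 0 * x 1 * x 2 :=
  stmt_15_general F R hFsop hFpos hR0 hR1 hR2
end

section
/- Orbits of R_H near the boundary move through the sector G_1 = {x ∈ S² : x_1 ≥ x_2 ≥ x_3} into G_1 ∪ G_2, where G_2 = {x ∈ S² : x_1 ≥ x_3 ≥ x_2}: for every x ∈ G_1 one has (R_H(x))_1 ≥ x_1 ≥ x_2 ≥ (R_H(x))_2 and (R_H(x))_3 ≤ 2 x_3; consequently, if in addition x_3 ≤ 1/6, then R_H(x) ∈ G_1 ∪ G_2. -/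
open Filter Topology

/-- for `x` in the sector `G₁ = {x ∈ S² : x₁ ≥ x₂ ≥ x₃}` one has
`(R_H x)₁ ≥ x₁ ≥ x₂ ≥ (R_H x)₂` and `(R_H x)₃ ≤ 2x₃`; consequently if moreover
`x₃ ≤ 1/6` then `R_H(x) ∈ G₁ ∪ G₂` where `G₂ = {x ∈ S² : x₁ ≥ x₃ ≥ x₂}`. -/
theorem stmt_17
    (F R : (Fin 3 → ℝ) → (Fin 3 → ℝ))
    (hFdiff : ContDiffOn ℝ 1 F ball3)
    (hFsop : ∀ x ∈ ball3, ∀ i j, F x j ≤ F x i ↔ x j ≤ x i)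
    (hFpos : ∀ x ∈ ball3, ∀ k, 0 < F x k ∧ F x k ≤ 1)
    (hR0 : ∀ x, R x 0 = x 0 * (1 + x 1 * F x 0 - x 2 * F x 2))
    (hR1 : ∀ x, R x 1 = x 1 * (1 + x 2 * F x 1 - x 0 * F x 0))
    (hR2 : ∀ x, R x 2 = x 2 * (1 + x 0 * F x 2 - x 1 * F x 1)) :
    ∀ x ∈ simplex2, x 2 ≤ x 1 → x 1 ≤ x 0 →
      (x 0 ≤ R x 0 ∧ R x 1 ≤ x 1 ∧ R x 2 ≤ 2 * x 2) ∧
      (x 2 ≤ 1/6 →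
        (R x 2 ≤ R x 1 ∧ R x 1 ≤ R x 0) ∨ (R x 1 ≤ R x 2 ∧ R x 2 ≤ R x 0)) := by
  intro x hx h21 h10
  obtain ⟨hnn, hsum⟩ := hx
  have hb : x ∈ ball3 := ⟨hnn, le_of_eq hsum⟩
  have h0 := hnn 0
  have h1 := hnn 1
  have h2 := hnn 2
  have hf20 : F x 2 ≤ F x 0 := (hFsop x hb 0 2).mpr (h21.trans h10)
  have hf10 : F x 1 ≤ F x 0 := (hFsop x hb 0 1).mpr h10
  have hf0 := hFpos x hb 0
  have hf1 := hFpos x hb 1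
  have hf2 := hFpos x hb 2
  have hR0x : x 0 ≤ R x 0 := by
    rw [hR0]
    nlinarith [mul_le_mul h21 hf20 hf2.1.le h1]
  have hR1x : R x 1 ≤ x 1 := by
    rw [hR1]
    nlinarith [mul_le_mul (h21.trans h10) hf10 hf1.1.le h0]
  have hR2x : R x 2 ≤ 2 * x 2 := by
    rw [hR2]
    have hx0le1 : x 0 ≤ 1 := by linarith
    nlinarith [mul_le_mul hx0le1 hf2.2 hf2.1.le zero_le_one, mul_nonneg h1 hf1.1.le,
      mul_nonneg h2 (mul_nonneg h1 hf1.1.le)]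
  refine ⟨⟨hR0x, hR1x, hR2x⟩, fun h6 => ?_⟩
  have hx013 : (1:ℝ)/3 ≤ x 0 := by linarith
  have hR10 : R x 1 ≤ R x 0 := hR1x.trans (h10.trans hR0x)
  have hR20 : R x 2 ≤ R x 0 := by
    calc R x 2 ≤ 2 * x 2 := hR2x
    _ ≤ 1/3 := by linarith
    _ ≤ x 0 := hx013
    _ ≤ R x 0 := hR0x
  rcases le_total (R x 2) (R x 1) with h | h
  · exact Or.inl ⟨h, hR10⟩
  · exact Or.inr ⟨h, hR20⟩
end

section
/- Trapping times near the boundary grow exponentially: let x ∈ S² with x_2 ≥ x_1 ≥ x_3 (i.e. x ∈ G_6 with x_2 ≥ 1/3) and suppose that (R_H(x))_1 ≥ 1/3 and that for some n ≥ 1 the point R_H^{(n+1)}(x) satisfies (R_H^{(n+1)}(x))_3 ≥ 1/3. Then 2^n ≥ 1/(81 ξ(R_H(x))), where ξ(y) = y_1 y_2 y_3; equivalently, n ≥ log_2(1/(81 ξ(R_H(x)))). -/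
open Filter Topology

/-- exponential growth of trapping times near the boundary: if
`x ∈ G₆` (i.e. `x₂ ≥ x₁ ≥ x₃`), `(R_H x)₁ ≥ 1/3`, and `(R_H^{(n+1)} x)₃ ≥ 1/3`
for some `n ≥ 1`, then `2ⁿ ≥ 1/(81 ξ(R_H x))` where `ξ(y) = y₁y₂y₃`. -/
theorem stmt_18
    (F R : (Fin 3 → ℝ) → (Fin 3 → ℝ))
    (hFdiff : ContDiffOn ℝ 1 F ball3)
    (hFsop : ∀ x ∈ ball3, ∀ i j, F x j ≤ F x i ↔ x j ≤ x i)
    (hFpos : ∀ x ∈ ball3, ∀ k, 0 < F x k ∧ F x k ≤ 1)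
    (hR0 : ∀ x, R x 0 = x 0 * (1 + x 1 * F x 0 - x 2 * F x 2))
    (hR1 : ∀ x, R x 1 = x 1 * (1 + x 2 * F x 1 - x 0 * F x 0))
    (hR2 : ∀ x, R x 2 = x 2 * (1 + x 0 * F x 2 - x 1 * F x 1)) :
    ∀ x ∈ simplex2, x 2 ≤ x 0 → x 0 ≤ x 1 →
      (1 : ℝ)/3 ≤ R x 0 →
      ∀ n : ℕ, 1 ≤ n → (1 : ℝ)/3 ≤ (R^[n + 1] x) 2 →
      1 / (81 * (R x 0 * R x 1 * R x 2)) ≤ (2 : ℝ)^n := by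
  intro x hx h20 h01 hRx0 n hn hRn
  have hball : ∀ y : Fin 3 → ℝ, y ∈ simplex2 → y ∈ ball3 := by
    intro y hy; exact ⟨hy.1, le_of_eq hy.2⟩
  -- R maps the simplex into itself
  have hmem : ∀ y ∈ simplex2, R y ∈ simplex2 := by
    intro y hy
    obtain ⟨hpos, hsum⟩ := hy
    have h0 := hpos 0; have h1 := hpos 1; have h2 := hpos 2
    have f0 := hFpos y (hball y ⟨hpos, hsum⟩) 0
    have f1 := hFpos y (hball y ⟨hpos, hsum⟩) 1
    have f2 := hFpos y (hball y ⟨hpos, hsum⟩) 2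
    constructor
    · intro k
      fin_cases k
      · show 0 ≤ R y 0
        rw [hR0]
        have hfac : 0 ≤ 1 + y 1 * F y 0 - y 2 * F y 2 := by
          nlinarith [mul_le_of_le_one_right h2 f2.2, mul_nonneg h1 f0.1.le]
        exact mul_nonneg h0 hfac
      · show 0 ≤ R y 1
        rw [hR1]
        have hfac : 0 ≤ 1 + y 2 * F y 1 - y 0 * F y 0 := by
          nlinarith [mul_le_of_le_one_right h0 f0.2, mul_nonneg h2 f1.1.le]
        exact mul_nonneg h1 hfac
      · show 0 ≤ R y 2
        rw [hR2]
        have hfac : 0 ≤ 1 + y 0 * F y 2 - y 1 * F y 1 := by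
          nlinarith [mul_le_of_le_one_right h1 f1.2, mul_nonneg h0 f2.1.le]
        exact mul_nonneg h2 hfac
    · rw [hR0, hR1, hR2]
      linear_combination hsum
  -- the third coordinate at most doubles at each step
  have key : ∀ y ∈ simplex2, R y 2 ≤ 2 * y 2 := by
    intro y hy
    obtain ⟨hpos, hsum⟩ := hy
    have h0 := hpos 0; have h1 := hpos 1; have h2 := hpos 2
    have f1 := hFpos y (hball y ⟨hpos, hsum⟩) 1
    have f2 := hFpos y (hball y ⟨hpos, hsum⟩) 2
    rw [hR2]
    nlinarith [mul_nonneg h2 (mul_nonneg h1 f1.1.le),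
      mul_nonneg (mul_nonneg h2 h0) (sub_nonneg.2 f2.2),
      mul_nonneg h2 (by linarith : (0:ℝ) ≤ 1 - y 0)]
  have hRx : R x ∈ simplex2 := hmem x hx
  have iter : ∀ m : ℕ, (R^[m] (R x)) ∈ simplex2 ∧ (R^[m] (R x)) 2 ≤ 2 ^ m * (R x) 2 := by
    intro m
    induction m with
    | zero => exact ⟨hRx, by simp⟩
    | succ m ih =>
      rw [Function.iterate_succ_apply']
      refine ⟨hmem _ ih.1, ?_⟩
      calc R (R^[m] (R x)) 2 ≤ 2 * (R^[m] (R x)) 2 := key _ ih.1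
        _ ≤ 2 * (2 ^ m * (R x) 2) := by linarith [ih.2]
        _ = 2 ^ (m + 1) * (R x) 2 := by ring
  -- lower bound on (R x) 2
  have hiter := (iter n).2
  rw [Function.iterate_succ_apply] at hRn
  have hc : (1 : ℝ)/3 ≤ 2 ^ n * (R x) 2 := le_trans hRn hiter
  -- lower bound on (R x) 1
  obtain ⟨hpos, hsum⟩ := hx
  have h0 := hpos 0; have h1 := hpos 1; have h2 := hpos 2
  have f0 := hFpos x (hball x ⟨hpos, hsum⟩) 0
  have f1 := hFpos x (hball x ⟨hpos, hsum⟩) 1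
  have hb : (1 : ℝ)/6 ≤ R x 1 := by
    rw [hR1]
    have hx1 : (1 : ℝ)/3 ≤ x 1 := by linarith
    have hx0 : x 0 ≤ 1/2 := by linarith
    have hfac : (1 : ℝ)/2 ≤ 1 + x 2 * F x 1 - x 0 * F x 0 := by
      nlinarith [mul_le_of_le_one_right h0 f0.2, mul_nonneg h2 f1.1.le]
    nlinarith
  -- conclude
  have h2n : (0 : ℝ) < 2 ^ n := by positivity
  have hcpos : (0 : ℝ) < R x 2 := by
    by_contra h
    push_neg at h
    have := mul_nonpos_of_nonneg_of_nonpos h2n.le h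
    linarith
  have hprodpos : (0 : ℝ) < 81 * (R x 0 * R x 1 * R x 2) := by
    have ha : (0 : ℝ) < R x 0 := by linarith
    have hb' : (0 : ℝ) < R x 1 := by linarith
    positivity
  rw [div_le_iff₀ hprodpos]
  nlinarith [mul_le_mul hRx0 hb (by norm_num : (0:ℝ) ≤ 1/6) (by linarith : (0:ℝ) ≤ R x 0),
    mul_le_mul (mul_le_mul hRx0 hb (by norm_num : (0:ℝ) ≤ 1/6) (by linarith : (0:ℝ) ≤ R x 0)) hc
      (by norm_num : (0:ℝ) ≤ 1/3)
      (mul_nonneg (by linarith : (0:ℝ) ≤ R x 0) (by linarith : (0:ℝ) ≤ R x 1))]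
end
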